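/- Let φ: s ⊸ t₁ and ψ: s ⊸ t₂ be parallel steps in a weakly orthogonal iTRS R, with d_φ and d_ψ the minimal depths of a contracted redex in φ and ψ respectively. Then the weakly orthogonal projections φ/ψ and ψ/φ only contract redexes at depth ≥ min(d_φ, d_ψ). If moreover R contains no collapsing rules, then φ/ψ contracts redexes only at depth ≥ min(d_φ, d_ψ + 1) and ψ/φ only at depth ≥ min(d_ψ, d_φ + 1). -/

import Mathlib

/-!
Infinitary term rewriting: possibly infinite first-order terms, infinitary
term rewriting systems (iTRSs), strongly convergent transfinite reductions,
parallel steps, multi-steps (complete developments), and clusters,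
following Endrullis–Grabmayer–Hendriks–Klop–van Oostrom,
"Infinitary Term Rewriting for Weakly Orthogonal Systems".
-/

namespace WOInf

/-- Positions in terms: finite sequences of naturals (child indices, `1`-based). -/
abbrev Pos : Type := List ℕ

/-- Possibly infinite terms over the signature `(F, ar)` with variables `V`:
partial maps from positions to symbols with defined root, whose domain
respects arities (the `i`-th child of a node is defined exactly when the node
carries a function symbol `f` and `1 ≤ i ≤ ar f`); such a domain is
automatically nonempty and prefix-closed. -/
structure Term (F V : Type) (ar : F → ℕ) : Type where
  val : Pos → Option (F ⊕ V)
  root_isSome : (val []).isSome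
  node : ∀ p i, (val (p ++ [i])).isSome ↔
      ∃ f, val p = some (Sum.inl f) ∧ 1 ≤ i ∧ i ≤ ar f

/-- Finite terms (used for left-hand sides of rules). -/
inductive FTerm (F V : Type) (ar : F → ℕ) : Type
  | var : V → FTerm F V ar
  | app : (f : F) → (Fin (ar f) → FTerm F V ar) → FTerm F V ar

variable {F V : Type} {ar : F → ℕ}

/-- The symbol of a finite term at a position (child indices `1`-based). -/
def FTerm.val : FTerm F V ar → Pos → Option (F ⊕ V)
  | .var x, [] => some (Sum.inr x)
  | .app f _, [] => some (Sum.inl f)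
  | .var _, _ :: _ => none
  | .app f ts, i :: p =>
      if h : 1 ≤ i ∧ i ≤ ar f then FTerm.val (ts ⟨i - 1, by omega⟩) p else none

/-- An infinitary term rewriting system (iTRS): finitely many rules
`ℓ → r` where `ℓ` is a finite non-variable term, `r` is a possibly infinite
term, and every variable of `r` occurs in `ℓ`. -/
structure ITRS (F V : Type) (ar : F → ℕ) : Type 1 where
  /-- the (finite) index type of rules -/
  R : Type
  finR : Finite R
  /-- left-hand sides -/
  lhs : R → FTerm F V ar
  /-- right-hand sides -/
  rhs : R → Term F V ar
  lhs_not_var : ∀ ρ x, lhs ρ ≠ FTerm.var x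
  var_cond : ∀ ρ x p, (rhs ρ).val p = some (Sum.inr x) →
      ∃ q, (lhs ρ).val q = some (Sum.inr x)

/-- The subtree of `t` at position `p` is (extensionally) the term `u`. -/
def SubtreeEq (t : Term F V ar) (p : Pos) (u : Term F V ar) : Prop :=
  ∀ q, t.val (p ++ q) = u.val q

/-- The subterm of `t` at position `p` is the instance of the finite term `ℓ`
under the substitution `σ`. -/
def MatchesAt (ℓ : FTerm F V ar) (σ : V → Term F V ar)
    (t : Term F V ar) (p : Pos) : Prop :=
  (∀ q f, ℓ.val q = some (Sum.inl f) → t.val (p ++ q) = some (Sum.inl f)) ∧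
  (∀ q x, ℓ.val q = some (Sum.inr x) → SubtreeEq t (p ++ q) (σ x))

/-- The subterm of `t` at position `p` is the instance of the possibly
infinite term `r` under the substitution `σ`. -/
def InstanceAt (r : Term F V ar) (σ : V → Term F V ar)
    (t : Term F V ar) (p : Pos) : Prop :=
  (∀ q f, r.val q = some (Sum.inl f) → t.val (p ++ q) = some (Sum.inl f)) ∧
  (∀ q x, r.val q = some (Sum.inr x) → SubtreeEq t (p ++ q) (σ x))

variable (S : ITRS F V ar)

/-- A redex (occurrence): a position together with a rule. -/
structure Redex (S : ITRS F V ar) : Type where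
  pos : Pos
  rule : S.R

/-- `u` is a redex occurrence in `t`. -/
def IsRedex (t : Term F V ar) (u : Redex S) : Prop :=
  ∃ σ, MatchesAt (S.lhs u.rule) σ t u.pos

/-- `t` rewrites to `t'` by contracting the redex occurrence `u`. -/
def StepRedex (u : Redex S) (t t' : Term F V ar) : Prop :=
  ∃ σ, MatchesAt (S.lhs u.rule) σ t u.pos ∧
       InstanceAt (S.rhs u.rule) σ t' u.pos ∧
       ∀ q, ¬ u.pos <+: q → t'.val q = t.val q

/-- `t` rewrites to `t'` by a rewrite step at position `p`. -/
def StepAt (p : Pos) (t t' : Term F V ar) : Prop :=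
  ∃ ρ : S.R, StepRedex S ⟨p, ρ⟩ t t'

/-- The pattern of a redex: the positions of the function symbols of its
left-hand side, placed at its position. -/
def Redex.pattern {S : ITRS F V ar} (u : Redex S) : Set Pos :=
  {p | ∃ q f, p = u.pos ++ q ∧ (S.lhs u.rule).val q = some (Sum.inl f)}

/-- Two redexes overlap if their patterns share a position. -/
def Overlap (u v : Redex S) : Prop := (u.pattern ∩ v.pattern).Nonempty

/-- A multi-redex in `t`: a set of pairwise non-overlapping redex
occurrences of `t`. -/
def IsMultiRedex (t : Term F V ar) (U : Set (Redex S)) : Prop :=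
  (∀ u ∈ U, IsRedex S t u) ∧ U.Pairwise fun u v => ¬ Overlap S u v

/-- Left-linearity: no left-hand side contains a repeated variable. -/
def LeftLinear : Prop :=
  ∀ ρ p q x, (S.lhs ρ).val p = some (Sum.inr x) →
    (S.lhs ρ).val q = some (Sum.inr x) → p = q

/-- Weak orthogonality: left-linear and all critical pairs are trivial;
for left-linear systems the latter is equivalent to the requirement that
contracting either of two overlapping redexes of any term yields the same
result. -/
def WeaklyOrthogonal : Prop :=
  LeftLinear S ∧
  ∀ (t t₁ t₂ : Term F V ar) (u v : Redex S), Overlap S u v →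
    StepRedex S u t t₁ → StepRedex S v t t₂ → t₁ = t₂

/-- A rule is collapsing if its right-hand side is a variable. -/
def Collapsing (ρ : S.R) : Prop := ∃ x, (S.rhs ρ).val [] = some (Sum.inr x)

/-- The system has no collapsing rules. -/
def NonCollapsing : Prop := ∀ ρ, ¬ Collapsing S ρ

/-- The system is a TRS: all right-hand sides are finite terms. -/
def IsTRS : Prop := ∀ ρ, {p : Pos | ((S.rhs ρ).val p).isSome}.Finite

/-- Two terms agree at all positions of depth at most `k`
(equivalently, their distance is at most `2^{-k}`). -/
def AgreeUpTo (k : ℕ) (s t : Term F V ar) : Prop :=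
  ∀ p : Pos, p.length ≤ k → s.val p = t.val p

/-- `IsSCRed S α f p s t`: the data `(f, p)` constitutes a strongly convergent
reduction of ordinal length `α` from `s` to `t`: `f β` is the `β`-th term,
`p β` the position of the `β`-th step, and every limit ordinal `λ ≤ α` is
approached with the terms converging to `f λ` and the depths of the steps
tending to infinity. -/
def IsSCRed (α : Ordinal) (f : Ordinal → Term F V ar) (p : Ordinal → Pos)
    (s t : Term F V ar) : Prop :=
  f 0 = s ∧ f α = t ∧
  (∀ β < α, StepAt S (p β) (f β) (f (β + 1))) ∧
  ∀ l ≤ α, Order.IsSuccLimit l → ∀ k : ℕ, ∃ β < l, ∀ γ, β ≤ γ → γ < l →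
    AgreeUpTo k (f γ) (f l) ∧ k ≤ (p γ).length

/-- The infinitary rewriting relation `s ↠∞ t`: there is a strongly
convergent reduction (of some ordinal length) from `s` to `t`. -/
def IRed (s t : Term F V ar) : Prop :=
  ∃ (α : Ordinal.{0}) (f : Ordinal → Term F V ar) (p : Ordinal → Pos),
    IsSCRed S α f p s t

/-- `IsSContRed S α f p s`: a strongly continuous reduction sequence of
ordinal length `α` starting at `s`: convergence of the terms and depths
tending to infinity are required at every limit ordinal strictly below `α`. -/
def IsSContRed (α : Ordinal) (f : Ordinal → Term F V ar) (p : Ordinal → Pos)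
    (s : Term F V ar) : Prop :=
  f 0 = s ∧
  (∀ β < α, StepAt S (p β) (f β) (f (β + 1))) ∧
  ∀ l < α, Order.IsSuccLimit l → ∀ k : ℕ, ∃ β < l, ∀ γ, β ≤ γ → γ < l →
    AgreeUpTo k (f γ) (f l) ∧ k ≤ (p γ).length

/-- A strongly continuous reduction sequence of length `α` with step
positions `p` is divergent (not strongly convergent) if `α` is a limit
ordinal and the depths of the steps do not tend to infinity when
approaching `α`. -/
def Divergent (α : Ordinal) (p : Ordinal → Pos) : Prop :=
  Order.IsSuccLimit α ∧ ¬ ∀ k : ℕ, ∃ β < α, ∀ γ, β ≤ γ → γ < α → k ≤ (p γ).length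

/-- A set of redexes at pairwise disjoint (parallel) positions. -/
def ParallelSet (U : Set (Redex S)) : Prop :=
  U.Pairwise fun u v => ¬ u.pos <+: v.pos ∧ ¬ v.pos <+: u.pos

/-- The parallel step `t ⊸_U t'`: the simultaneous contraction (complete
development) of a set `U` of redexes of `t` at pairwise disjoint positions. -/
def ParStep (U : Set (Redex S)) (t t' : Term F V ar) : Prop :=
  ParallelSet S U ∧
  (∀ u ∈ U, ∃ σ, MatchesAt (S.lhs u.rule) σ t u.pos ∧
      InstanceAt (S.rhs u.rule) σ t' u.pos) ∧
  ∀ q, (∀ u ∈ U, ¬ u.pos <+: q) → t'.val q = t.val q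

/-- The descendants (residuals) of the position `q` across a rewrite step
with rule `ρ` at position `p`: positions not below `p` descend to themselves,
and positions within the substitution part are relocated according to the
occurrences of the corresponding variable in the right-hand side. -/
def Descendants (ρ : S.R) (p : Pos) (q : Pos) : Set Pos :=
  {q' | (¬ p <+: q ∧ q' = q) ∨
    ∃ q₁ q₂ x, q = p ++ q₁ ++ q₂ ∧ (S.lhs ρ).val q₁ = some (Sum.inr x) ∧
      ∃ q₁', (S.rhs ρ).val q₁' = some (Sum.inr x) ∧ q' = p ++ q₁' ++ q₂}

/-- The overlap relation on the redex occurrences of `t`. -/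
def OverlapIn (t : Term F V ar) (u v : Redex S) : Prop :=
  IsRedex S t u ∧ IsRedex S t v ∧ Overlap S u v

/-- A cluster in `t`: a nonempty connected component of the overlap relation
on the redex occurrences of `t`. -/
def IsCluster (t : Term F V ar) (c : Set (Redex S)) : Prop :=
  c.Nonempty ∧ (∀ u ∈ c, IsRedex S t u) ∧
  (∀ u ∈ c, ∀ v, IsRedex S t v → Overlap S u v → v ∈ c) ∧
  (∀ u ∈ c, ∀ v ∈ c, Relation.ReflTransGen (OverlapIn S t) u v)

/-- The pattern of a cluster: the union of the patterns of its redexes. -/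
def clusterPattern (c : Set (Redex S)) : Set Pos := ⋃ u ∈ c, u.pattern

/-- A `Y`-cluster: a cluster containing two redexes at parallel (disjoint)
positions. -/
def IsYCluster (c : Set (Redex S)) : Prop :=
  ∃ u ∈ c, ∃ v ∈ c, ¬ u.pos <+: v.pos ∧ ¬ v.pos <+: u.pos

/-- A cluster is infinite if the set of roots of its redexes is infinite. -/
def InfiniteCluster (c : Set (Redex S)) : Prop :=
  (Redex.pos '' c).Infinite

/-- A trivial cluster: a `Y`-cluster or an infinite `I`-cluster
(a cluster that is not a `Y`-cluster is an `I`-cluster). -/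
def TrivialCluster (c : Set (Redex S)) : Prop :=
  IsYCluster S c ∨ InfiniteCluster S c

/-- `IsDevelopment S α f rp U s t`: a (complete) development of the
multi-redex `U 0` of `s`: a strongly convergent reduction from `s` to `t` of
length `α`, each of whose steps contracts a member `rp β` of the current set
`U β` of residuals of `U 0`, where residuals are tracked along steps (via the
descendant relation) and along limits, and no residual is left at the end. -/
def IsDevelopment (α : Ordinal) (f : Ordinal → Term F V ar)
    (rp : Ordinal → Redex S) (U : Ordinal → Set (Redex S))
    (s t : Term F V ar) : Prop :=
  f 0 = s ∧ f α = t ∧ U α = ∅ ∧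
  (∀ β < α, rp β ∈ U β ∧ StepRedex S (rp β) (f β) (f (β + 1)) ∧
    U (β + 1) = ⋃ v ∈ U β \ {rp β},
      {w : Redex S | w.rule = v.rule ∧
        w.pos ∈ Descendants S (rp β).rule (rp β).pos v.pos}) ∧
  ∀ l ≤ α, Order.IsSuccLimit l →
    (U l = {u | ∃ β < l, ∀ γ, β ≤ γ → γ < l → u ∈ U γ}) ∧
    ∀ k : ℕ, ∃ β < l, ∀ γ, β ≤ γ → γ < l →
      AgreeUpTo k (f γ) (f l) ∧ k ≤ (rp γ).pos.length

/-- The multi-step `s ⊸_U₀ t`: a complete development of the multi-redex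
`U₀` of `s`. -/
def MultiStep (U₀ : Set (Redex S)) (s t : Term F V ar) : Prop :=
  IsMultiRedex S s U₀ ∧
  ∃ (α : Ordinal.{0}) (f : Ordinal → Term F V ar) (rp : Ordinal → Redex S)
    (U : Ordinal → Set (Redex S)), U 0 = U₀ ∧ IsDevelopment S α f rp U s t

/-- The multi-step rewrite relation `s ⊸ t`. -/
def MStep (s t : Term F V ar) : Prop := ∃ U₀, MultiStep S U₀ s t

end WOInf

namespace WOInf

section AuxA
variable {F V : Type} {ar : F → ℕ}

theorem prefix_append_cancel_iff {p l1 l2 : Pos} : (p ++ l1 <+: p ++ l2) ↔ l1 <+: l2 := by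
  constructor
  · rintro ⟨t, h⟩; rw [List.append_assoc] at h; exact ⟨t, List.append_cancel_left h⟩
  · rintro ⟨t, rfl⟩; exact ⟨t, by rw [List.append_assoc]⟩

theorem prefix_comparable {l1 l2 l3 : Pos} (h1 : l1 <+: l3) (h2 : l2 <+: l3) :
    l1 <+: l2 ∨ l2 <+: l1 := List.prefix_or_prefix_of_prefix h1 h2

theorem length_lt_of_prefix_ne {l1 l2 : Pos} (h1 : l1 <+: l2) (h : l1 ≠ l2) :
    l1.length < l2.length :=
  lt_of_le_of_ne h1.length_le (fun he => h (h1.eq_of_length he))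

theorem Term.ext' {t t' : Term F V ar} (h : ∀ p, t.val p = t'.val p) : t = t' := by
  cases t; cases t'; simp only [Term.mk.injEq]; exact funext h

theorem isSome_of_append {t : Term F V ar} {p q : Pos}
    (h : (t.val (p ++ q)).isSome) : (t.val p).isSome := by
  induction q using List.reverseRecOn with
  | nil => simpa using h
  | append_singleton q i ih =>
      rw [← List.append_assoc] at h
      obtain ⟨f, hf, _⟩ := (t.node (p ++ q) i).mp h
      exact ih (by rw [hf]; rfl)

theorem val_append_none {t : Term F V ar} {p : Pos}
    (hp : ∀ f, t.val p ≠ some (Sum.inl f)) {q : Pos} (hq : q ≠ []) :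
    t.val (p ++ q) = none := by
  cases q with
  | nil => exact absurd rfl hq
  | cons i q' =>
      by_contra h
      have hs : (t.val (p ++ i :: q')).isSome := by
        cases hv : t.val (p ++ i :: q') with
        | none => exact absurd hv h
        | some z => rfl
      have : (t.val (p ++ [i])).isSome := by
        have : p ++ i :: q' = (p ++ [i]) ++ q' := by simp
        rw [this] at hs; exact isSome_of_append hs
      obtain ⟨f, hf, _⟩ := (t.node p i).mp this
      exact hp f hf

theorem val_prefix_inl {t : Term F V ar} {p q : Pos}
    (h : (t.val (p ++ q)).isSome) (hq : q ≠ []) : ∃ f, t.val p = some (Sum.inl f) := by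
  by_contra hc
  push_neg at hc
  rw [val_append_none hc hq] at h
  exact (by simp at h : False)

theorem tvar_prefix_eq {t : Term F V ar} {q1 q2 : Pos} {x1 x2 : V}
    (h1 : t.val q1 = some (Sum.inr x1)) (h2 : t.val q2 = some (Sum.inr x2))
    (h : q1 <+: q2) : q1 = q2 := by
  obtain ⟨r, rfl⟩ := h
  rcases eq_or_ne r [] with rfl | hr
  · simp
  · exfalso
    obtain ⟨f, hf⟩ := val_prefix_inl (by rw [h2]; rfl) hr
    rw [h1] at hf; exact (by simp at hf : False)

def Term.sub (t : Term F V ar) (p : Pos) (h : (t.val p).isSome) : Term F V ar :=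
  ⟨fun q => t.val (p ++ q), by simpa using h,
   fun q i => by
     show (t.val (p ++ (q ++ [i]))).isSome ↔ ∃ f, t.val (p ++ q) = some (Sum.inl f) ∧ _
     rw [← List.append_assoc]; exact t.node (p ++ q) i⟩

theorem FTerm.fval_nil_isSome (ℓ : FTerm F V ar) : (ℓ.val []).isSome := by
  cases ℓ <;> simp [FTerm.val]

theorem FTerm.fval_node (ℓ : FTerm F V ar) (p : Pos) (i : ℕ) :
    (ℓ.val (p ++ [i])).isSome ↔ ∃ f, ℓ.val p = some (Sum.inl f) ∧ 1 ≤ i ∧ i ≤ ar f := by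
  induction p generalizing ℓ with
  | nil =>
      cases ℓ with
      | var x => simp [FTerm.val]
      | app f ts =>
          by_cases h : 1 ≤ i ∧ i ≤ ar f
          · simp [FTerm.val, h, FTerm.fval_nil_isSome]
          · simp [FTerm.val, h]
  | cons j p ih =>
      cases ℓ with
      | var x => simp [FTerm.val]
      | app f ts =>
          by_cases h : 1 ≤ j ∧ j ≤ ar f
          · simpa [FTerm.val, h] using ih _
          · simp [FTerm.val, h]

theorem FTerm.fval_isSome_of_append {ℓ : FTerm F V ar} {p q : Pos}
    (h : (ℓ.val (p ++ q)).isSome) : (ℓ.val p).isSome := by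
  induction q using List.reverseRecOn with
  | nil => simpa using h
  | append_singleton q i ih =>
      rw [← List.append_assoc] at h
      obtain ⟨f, hf, _⟩ := (FTerm.fval_node _ _ _).mp h
      exact ih (by rw [hf]; rfl)

theorem FTerm.fval_prefix_inl {ℓ : FTerm F V ar} {p q : Pos}
    (h : (ℓ.val (p ++ q)).isSome) (hq : q ≠ []) : ∃ f, ℓ.val p = some (Sum.inl f) := by
  cases q with
  | nil => exact absurd rfl hq
  | cons i q' =>
      have : (ℓ.val (p ++ [i])).isSome := by
        have he : p ++ i :: q' = (p ++ [i]) ++ q' := by simp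
        rw [he] at h; exact FTerm.fval_isSome_of_append h
      obtain ⟨f, hf, _⟩ := (FTerm.fval_node _ _ _).mp this
      exact ⟨f, hf⟩

theorem fvar_prefix_eq {ℓ : FTerm F V ar} {q1 q2 : Pos} {x1 x2 : V}
    (h1 : ℓ.val q1 = some (Sum.inr x1)) (h2 : ℓ.val q2 = some (Sum.inr x2))
    (h : q1 <+: q2) : q1 = q2 := by
  obtain ⟨r, rfl⟩ := h
  rcases eq_or_ne r [] with rfl | hr
  · simp
  · exfalso
    obtain ⟨f, hf⟩ := FTerm.fval_prefix_inl (by rw [h2]; rfl) hr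
    rw [h1] at hf; exact (by simp at hf : False)

end AuxA

section AuxB
variable {F V : Type} {ar : F → ℕ}

/-- Evaluation of the contractum: value at relative position `r` of the
instance of `T` under substitution `σ`, where `a` is the accumulated
position inside `T`. -/
def go (σ : V → Term F V ar) (T : Term F V ar) : Pos → Pos → Option (F ⊕ V)
  | a, [] =>
      match T.val a with
      | some (Sum.inl f) => some (Sum.inl f)
      | some (Sum.inr x) => (σ x).val []
      | none => none
  | a, i :: r =>
      match T.val a with
      | some (Sum.inl _) => go σ T (a ++ [i]) r
      | some (Sum.inr x) => (σ x).val (i :: r)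
      | none => none

theorem go_inl {σ : V → Term F V ar} {T : Term F V ar} {f : F} :
    ∀ (r a : Pos), T.val (a ++ r) = some (Sum.inl f) → go σ T a r = some (Sum.inl f) := by
  intro r
  induction r with
  | nil => intro a h; rw [List.append_nil] at h; simp [go, h]
  | cons i r ih =>
      intro a h
      have hs : (T.val (a ++ [i])).isSome := by
        rw [show a ++ i :: r = (a ++ [i]) ++ r by simp] at h
        exact isSome_of_append (by rw [h]; rfl)
      obtain ⟨g, hg, _⟩ := (T.node a i).mp hs
      simp only [go, hg]
      exact ih (a ++ [i]) (by rw [List.append_assoc]; simpa using h)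

theorem go_var {σ : V → Term F V ar} {T : Term F V ar} {x : V} :
    ∀ (q a : Pos), T.val (a ++ q) = some (Sum.inr x) →
      ∀ r, go σ T a (q ++ r) = (σ x).val r := by
  intro q
  induction q with
  | nil =>
      intro a h r
      rw [List.append_nil] at h
      cases r with
      | nil => simp [go, h]
      | cons i r' => simp [go, h]
  | cons i q' ih =>
      intro a h r
      have hs : (T.val (a ++ [i])).isSome := by
        rw [show a ++ i :: q' = (a ++ [i]) ++ q' by simp] at h
        exact isSome_of_append (by rw [h]; rfl)
      obtain ⟨g, hg, _⟩ := (T.node a i).mp hs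
      show go σ T a (i :: (q' ++ r)) = (σ x).val r
      simp only [go, hg]
      exact ih (a ++ [i]) (by rw [List.append_assoc]; simpa using h) r

theorem go_region {σ : V → Term F V ar} {T : Term F V ar} :
    ∀ (r a : Pos), (go σ T a r).isSome →
      (∃ f, T.val (a ++ r) = some (Sum.inl f)) ∨
      ∃ q₁ q₂ x, r = q₁ ++ q₂ ∧ T.val (a ++ q₁) = some (Sum.inr x) := by
  intro r
  induction r with
  | nil =>
      intro a h
      cases hv : T.val a with
      | none => simp [go, hv] at h
      | some z =>
          cases z with
          | inl f => exact Or.inl ⟨f, by simpa using hv⟩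
          | inr x => exact Or.inr ⟨[], [], x, by simp, by simpa using hv⟩
  | cons i r' ih =>
      intro a h
      cases hv : T.val a with
      | none => simp [go, hv] at h
      | some z =>
          cases z with
          | inr x => exact Or.inr ⟨[], i :: r', x, by simp, by simpa using hv⟩
          | inl f =>
              have h' : (go σ T (a ++ [i]) r').isSome := by simpa [go, hv] using h
              rcases ih (a ++ [i]) h' with ⟨g, hg⟩ | ⟨q₁, q₂, x, hq, hx⟩
              · exact Or.inl ⟨g, by rw [show a ++ i :: r' = (a ++ [i]) ++ r' by simp]; exact hg⟩
              · exact Or.inr ⟨i :: q₁, q₂, x, by simp [hq],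
                  by rw [show a ++ i :: q₁ = (a ++ [i]) ++ q₁ by simp]; exact hx⟩

theorem go_node {σ : V → Term F V ar} {T : Term F V ar} :
    ∀ (r a : Pos) (i : ℕ), (go σ T a (r ++ [i])).isSome ↔
      ∃ f, go σ T a r = some (Sum.inl f) ∧ 1 ≤ i ∧ i ≤ ar f := by
  intro r
  induction r with
  | nil =>
      intro a i
      simp only [List.nil_append]
      cases hv : T.val a with
      | none => simp [go, hv]
      | some z =>
          cases z with
          | inr x =>
              simp only [go, hv]
              exact (σ x).node [] i
          | inl f =>
              simp only [go, hv]
              constructor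
              · intro h
                have hs : (T.val (a ++ [i])).isSome := by
                  cases hv2 : T.val (a ++ [i]) with
                  | none => simp [go, hv2] at h
                  | some z => rfl
                obtain ⟨f', hf', h1, h2⟩ := (T.node a i).mp hs
                rw [hv] at hf'
                injection hf' with h3; injection h3 with h4; subst h4
                exact ⟨f, rfl, h1, h2⟩
              · rintro ⟨f', hf', h1, h2⟩
                injection hf' with h3; injection h3 with h4; subst h4
                have hs : (T.val (a ++ [i])).isSome := (T.node a i).mpr ⟨f, hv, h1, h2⟩
                cases hv2 : T.val (a ++ [i]) with
                | none => rw [hv2] at hs; simp at hs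
                | some z =>
                    cases z with
                    | inl g => simp [go, hv2]
                    | inr y => simp [go, hv2, ((σ y).root_isSome)]
  | cons j r' ih =>
      intro a i
      cases hv : T.val a with
      | none => simp [go, hv]
      | some z =>
          cases z with
          | inl f =>
              simp only [List.cons_append, go, hv]
              exact ih (a ++ [j]) i
          | inr x =>
              simp only [List.cons_append, go, hv]
              exact (σ x).node (j :: r') i

theorem go_congr {σ σ' : V → Term F V ar} {T : Term F V ar}
    (h : ∀ x q₁, T.val q₁ = some (Sum.inr x) → ∀ r', (σ x).val r' = (σ' x).val r') :
    ∀ (r a : Pos), go σ T a r = go σ' T a r := by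
  intro r
  induction r with
  | nil =>
      intro a
      cases hv : T.val a with
      | none => simp [go, hv]
      | some z =>
          cases z with
          | inl f => simp [go, hv]
          | inr x => simp [go, hv]; exact h x a hv []
  | cons i r' ih =>
      intro a
      cases hv : T.val a with
      | none => simp [go, hv]
      | some z =>
          cases z with
          | inl f => simp only [go, hv]; exact ih (a ++ [i])
          | inr x => simp only [go, hv]; exact h x a hv (i :: r')

theorem go_none {σ : V → Term F V ar} {T : Term F V ar} {r a : Pos}
    (h1 : ∀ f, T.val (a ++ r) ≠ some (Sum.inl f))
    (h2 : ∀ q₁ q₂ x, r = q₁ ++ q₂ → T.val (a ++ q₁) ≠ some (Sum.inr x)) :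
    go σ T a r = none := by
  cases hv : go σ T a r with
  | none => rfl
  | some z =>
      exfalso
      rcases go_region r a (by rw [hv]; rfl) with ⟨f, hf⟩ | ⟨q₁, q₂, x, hq, hx⟩
      · exact h1 f hf
      · exact h2 q₁ q₂ x hq hx

end AuxB

section AuxC
variable {F V : Type} {ar : F → ℕ} {S : ITRS F V ar}

theorem lhs_root (S : ITRS F V ar) (ρ : S.R) : ∃ f, (S.lhs ρ).val [] = some (Sum.inl f) := by
  cases h : S.lhs ρ with
  | var x => exact absurd h (S.lhs_not_var ρ x)
  | app f ts => exact ⟨f, rfl⟩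

theorem go_root_isSome (σ : V → Term F V ar) (T : Term F V ar) :
    (go σ T [] []).isSome := by
  cases hv : T.val [] with
  | none => have := T.root_isSome; rw [hv] at this; simp at this
  | some z =>
      cases z with
      | inl f => simp [go, hv]
      | inr x => simp [go, hv]; exact (σ x).root_isSome

/-- Conditions under which the one-level simultaneous contraction is defined. -/
def goodW (S : ITRS F V ar) (t : Term F V ar) (W : Set (Redex S)) : Prop :=
  (∀ w ∈ W, ∀ w' ∈ W, w.pos <+: w'.pos → w = w') ∧ ∀ w ∈ W, (t.val w.pos).isSome

open Classical in
/-- Value function of the one-level simultaneous contraction. -/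
noncomputable def Dval (S : ITRS F V ar) (t : Term F V ar) (W : Set (Redex S))
    (σf : Redex S → V → Term F V ar) (q : Pos) : Option (F ⊕ V) :=
  if h : ∃ w, w ∈ W ∧ w.pos <+: q then
    go (σf h.choose) (S.rhs h.choose.rule) [] (q.drop h.choose.pos.length)
  else t.val q

theorem Dval_out {t : Term F V ar} {W : Set (Redex S)} {σf} {q : Pos}
    (hn : ∀ w ∈ W, ¬ w.pos <+: q) : Dval S t W σf q = t.val q := by
  rw [Dval, dif_neg]
  rintro ⟨w, hw, hpre⟩; exact hn w hw hpre

theorem Dval_in {t : Term F V ar} {W : Set (Redex S)} {σf} {q : Pos}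
    (hg : ∀ w ∈ W, ∀ w' ∈ W, w.pos <+: w'.pos → w = w')
    {w : Redex S} (hw : w ∈ W) (hpre : w.pos <+: q) :
    Dval S t W σf q = go (σf w) (S.rhs w.rule) [] (q.drop w.pos.length) := by
  have h : ∃ w, w ∈ W ∧ w.pos <+: q := ⟨w, hw, hpre⟩
  rw [Dval, dif_pos h]
  have hc := h.choose_spec
  have : h.choose = w := by
    rcases prefix_comparable hc.2 hpre with h1 | h1
    · exact hg _ hc.1 _ hw h1
    · exact (hg _ hw _ hc.1 h1).symm
  rw [this]

/-- The one-level simultaneous contraction of a set of redexes at pairwise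
incomparable positions. -/
noncomputable def Dterm (S : ITRS F V ar) (t : Term F V ar) (W : Set (Redex S))
    (σf : Redex S → V → Term F V ar) (hg : goodW S t W) : Term F V ar := by
  refine ⟨Dval S t W σf, ?_, ?_⟩
  · by_cases h : ∃ w, w ∈ W ∧ w.pos <+: ([] : Pos)
    · obtain ⟨w, hw, hpre⟩ := h
      have hnil : w.pos = [] := List.prefix_nil.mp hpre
      rw [Dval_in hg.1 hw hpre, hnil]
      simpa using go_root_isSome _ _
    · push_neg at h
      rw [Dval_out h]
      exact t.root_isSome
  · intro p i
    by_cases hc : ∃ w, w ∈ W ∧ w.pos <+: p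
    · obtain ⟨w, hw, hpre⟩ := hc
      have hpre2 : w.pos <+: p ++ [i] := hpre.trans ⟨[i], rfl⟩
      rw [Dval_in hg.1 hw hpre, Dval_in hg.1 hw hpre2]
      obtain ⟨r, rfl⟩ := hpre
      rw [List.append_assoc, List.drop_left, List.drop_left]
      exact go_node r [] i
    · push_neg at hc
      rw [Dval_out hc]
      by_cases hc2 : ∃ w, w ∈ W ∧ w.pos <+: p ++ [i]
      · obtain ⟨w, hw, hp2⟩ := hc2
        have hwp : w.pos = p ++ [i] := by
          rcases List.prefix_concat_iff.mp hp2 with h1 | h1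
          · exact h1
          · exact absurd h1 (hc w hw)
        rw [Dval_in hg.1 hw hp2, hwp, List.drop_length]
        have hrhs : (go (σf w) (S.rhs w.rule) [] []).isSome := go_root_isSome _ _
        have hsome : (t.val (p ++ [i])).isSome := by
          have := hg.2 w hw; rwa [hwp] at this
        exact iff_of_true hrhs ((t.node p i).mp hsome)
      · push_neg at hc2
        rw [Dval_out hc2]
        exact t.node p i

theorem Dterm_val_out {t : Term F V ar} {W : Set (Redex S)} {σf} {hg} {q : Pos}
    (hn : ∀ w ∈ W, ¬ w.pos <+: q) : (Dterm S t W σf hg).val q = t.val q := Dval_out hn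

theorem Dterm_val_in {t : Term F V ar} {W : Set (Redex S)} {σf} {hg}
    {w : Redex S} (hw : w ∈ W) (r : Pos) :
    (Dterm S t W σf hg).val (w.pos ++ r) = go (σf w) (S.rhs w.rule) [] r := by
  rw [show (Dterm S t W σf hg).val (w.pos ++ r) = Dval S t W σf (w.pos ++ r) from rfl,
    Dval_in hg.1 hw ⟨r, rfl⟩, List.drop_left]

theorem goodW_of {t : Term F V ar} {W : Set (Redex S)} (hpar : ParallelSet S W)
    (hm : ∀ w ∈ W, ∃ σ, MatchesAt (S.lhs w.rule) σ t w.pos) : goodW S t W := by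
  constructor
  · intro w hw w' hw' hpre
    by_contra hne
    exact (hpar hw hw' hne).1 hpre
  · intro w hw
    obtain ⟨σ, hσ⟩ := hm w hw
    obtain ⟨f, hf⟩ := lhs_root S w.rule
    have := hσ.1 [] f hf
    rw [List.append_nil] at this
    rw [this]; rfl

theorem parstep_Dterm {t : Term F V ar} {W : Set (Redex S)}
    {σf : Redex S → V → Term F V ar} (hg : goodW S t W) (hpar : ParallelSet S W)
    (hm : ∀ w ∈ W, MatchesAt (S.lhs w.rule) (σf w) t w.pos) :
    ParStep S W t (Dterm S t W σf hg) := by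
  refine ⟨hpar, ?_, ?_⟩
  · intro w hw
    refine ⟨σf w, hm w hw, ?_, ?_⟩
    · intro q f hq
      rw [Dterm_val_in hw q]
      exact go_inl q [] hq
    · intro q x hq
      intro r
      rw [List.append_assoc, Dterm_val_in hw (q ++ r)]
      exact go_var q [] hq r
  · intro q hq
    exact Dval_out hq

open Classical in
/-- A canonical choice of matching substitutions for redexes of `s`. -/
noncomputable def sigS (S : ITRS F V ar) (s : Term F V ar) (w : Redex S) : V → Term F V ar :=
  if h : ∃ σ, MatchesAt (S.lhs w.rule) σ s w.pos then h.choose else fun _ => s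

theorem sigS_spec {s : Term F V ar} {w : Redex S}
    (h : ∃ σ, MatchesAt (S.lhs w.rule) σ s w.pos) :
    MatchesAt (S.lhs w.rule) (sigS S s w) s w.pos := by
  rw [sigS, dif_pos h]; exact h.choose_spec

end AuxC

section AuxD
variable {F V : Type} {ar : F → ℕ} {S : ITRS F V ar}

theorem go_var' {σ : V → Term F V ar} {T : Term F V ar} {x : V} {a q : Pos}
    (h : T.val (a ++ q) = some (Sum.inr x)) : go σ T a q = (σ x).val [] := by
  have := go_var (σ := σ) q a h []
  rwa [List.append_nil] at this

theorem inst_val {R : Term F V ar} {σ : V → Term F V ar} {t' : Term F V ar} {p : Pos}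
    (h : InstanceAt R σ t' p) : ∀ q, t'.val (p ++ q) = go σ R [] q := by
  intro q
  induction q using List.reverseRecOn with
  | nil =>
      cases hv : R.val [] with
      | none => have := R.root_isSome; rw [hv] at this; simp at this
      | some z =>
          cases z with
          | inl f =>
              rw [h.1 [] f hv, go_inl [] [] hv]
          | inr x =>
              have h2 := h.2 [] x hv []
              rw [List.append_nil, List.append_nil] at h2
              rw [show p ++ ([] : Pos) = p from List.append_nil p]
              exact h2.trans (go_var' (a := ([] : Pos)) (q := ([] : Pos)) hv).symm
  | append_singleton q i ih =>
      cases hg : go σ R [] q with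
      | none =>
          have hpar : t'.val (p ++ q) = none := by rw [ih, hg]
          have h1 : t'.val (p ++ (q ++ [i])) = none := by
            rw [← List.append_assoc]
            cases hv : t'.val ((p ++ q) ++ [i]) with
            | none => rfl
            | some z =>
                obtain ⟨f, hf, _⟩ := (t'.node (p ++ q) i).mp (by rw [hv]; rfl)
                rw [hpar] at hf; exact absurd hf (by simp)
          have h2 : go σ R [] (q ++ [i]) = none := by
            cases hv : go σ R [] (q ++ [i]) with
            | none => rfl
            | some z =>
                obtain ⟨f, hf, _⟩ := (go_node q [] i).mp (by rw [hv]; rfl)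
                rw [hg] at hf; exact absurd hf (by simp)
          rw [h1, h2]
      | some z =>
          rcases go_region q [] (by rw [hg]; rfl) with ⟨f, hf⟩ | ⟨q₁, q₂, x, hq, hx⟩
          · -- R.val q = inl f
            have hf' : R.val q = some (Sum.inl f) := hf
            cases hcv : R.val (q ++ [i]) with
            | some z' =>
                cases z' with
                | inl g =>
                    rw [h.1 (q ++ [i]) g hcv, go_inl (q ++ [i]) [] hcv]
                | inr x =>
                    have h2 := h.2 (q ++ [i]) x hcv []
                    rw [List.append_nil] at h2
                    exact h2.trans (go_var' (a := ([] : Pos)) (q := q ++ [i]) hcv).symm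
            | none =>
                have hnv : ¬ (1 ≤ i ∧ i ≤ ar f) := by
                  intro hval
                  have := (R.node q i).mpr ⟨f, hf', hval.1, hval.2⟩
                  rw [hcv] at this; simp at this
                have hz : z = Sum.inl f := by
                  have := go_inl (σ := σ) q [] hf'
                  rw [hg] at this; injection this
                have h1 : t'.val (p ++ (q ++ [i])) = none := by
                  rw [← List.append_assoc]
                  cases hv : t'.val ((p ++ q) ++ [i]) with
                  | none => rfl
                  | some z' =>
                      obtain ⟨f', hf2, hv1, hv2⟩ := (t'.node (p ++ q) i).mp (by rw [hv]; rfl)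
                      rw [ih, hg, hz] at hf2
                      injection hf2 with h3; injection h3 with h4; subst h4
                      exact absurd ⟨hv1, hv2⟩ hnv
                have h2 : go σ R [] (q ++ [i]) = none := by
                  cases hv : go σ R [] (q ++ [i]) with
                  | none => rfl
                  | some z' =>
                      obtain ⟨f', hf2, hv1, hv2⟩ := (go_node q [] i).mp (by rw [hv]; rfl)
                      rw [hg, hz] at hf2
                      injection hf2 with h3; injection h3 with h4; subst h4
                      exact absurd ⟨hv1, hv2⟩ hnv
                rw [h1, h2]
          · -- q = q₁ ++ q₂ with R.val q₁ = inr x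
            subst hq
            have hx' : R.val q₁ = some (Sum.inr x) := hx
            have h2 := h.2 q₁ x hx' (q₂ ++ [i])
            have hgo := go_var (σ := σ) q₁ [] hx (q₂ ++ [i])
            rw [List.append_assoc]
            rw [show p ++ (q₁ ++ (q₂ ++ [i])) = (p ++ q₁) ++ (q₂ ++ [i]) by simp] at *
            rw [h2, ← hgo]

theorem matches_sub_congr {ℓ : FTerm F V ar} {σ σ' : V → Term F V ar}
    {t : Term F V ar} {p : Pos} (h1 : MatchesAt ℓ σ t p) (h2 : MatchesAt ℓ σ' t p)
    {x : V} {q₁ : Pos} (hq : ℓ.val q₁ = some (Sum.inr x)) (r : Pos) :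
    (σ x).val r = (σ' x).val r := by
  rw [← h1.2 q₁ x hq r, h2.2 q₁ x hq r]

theorem parstep_val {U : Set (Redex S)} {t t' : Term F V ar} (h : ParStep S U t t')
    {u : Redex S} (hu : u ∈ U) (r : Pos) :
    t'.val (u.pos ++ r) = go (sigS S t u) (S.rhs u.rule) [] r := by
  obtain ⟨σ, hM, hI⟩ := h.2.1 u hu
  rw [inst_val hI r]
  refine go_congr ?_ r []
  intro x q₁ hq r'
  obtain ⟨q₀, hq₀⟩ := S.var_cond u.rule x q₁ hq
  exact matches_sub_congr hM (sigS_spec ⟨σ, hM⟩) hq₀ r'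

theorem match_region {ℓ : FTerm F V ar} {σ : V → Term F V ar} {t : Term F V ar} {p : Pos}
    (hM : MatchesAt ℓ σ t p) {r : Pos} (hs : (t.val (p ++ r)).isSome) :
    (∃ f, ℓ.val r = some (Sum.inl f)) ∨
    ∃ q₁ q₂ x, r = q₁ ++ q₂ ∧ ℓ.val q₁ = some (Sum.inr x) := by
  induction r using List.reverseRecOn with
  | nil =>
      cases hv : ℓ.val [] with
      | none => have := FTerm.fval_nil_isSome ℓ; rw [hv] at this; simp at this
      | some z =>
          cases z with
          | inl f => exact Or.inl ⟨f, rfl⟩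
          | inr x => exact Or.inr ⟨[], [], x, by simp, hv⟩
  | append_singleton r i ih =>
      have hs' : (t.val (p ++ r)).isSome := by
        rw [← List.append_assoc] at hs
        exact isSome_of_append hs
      rcases ih hs' with ⟨f, hf⟩ | ⟨q₁, q₂, x, hq, hx⟩
      · have htr := hM.1 r f hf
        have hvalid : 1 ≤ i ∧ i ≤ ar f := by
          rw [← List.append_assoc] at hs
          obtain ⟨f', hf', h1, h2⟩ := (t.node (p ++ r) i).mp hs
          rw [htr] at hf'
          injection hf' with h3; injection h3 with h4; subst h4
          exact ⟨h1, h2⟩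
        have : (ℓ.val (r ++ [i])).isSome := (FTerm.fval_node ℓ r i).mpr ⟨f, hf, hvalid⟩
        cases hv : ℓ.val (r ++ [i]) with
        | none => rw [hv] at this; simp at this
        | some z =>
            cases z with
            | inl g => exact Or.inl ⟨g, rfl⟩
            | inr x => exact Or.inr ⟨r ++ [i], [], x, by simp, hv⟩
      · exact Or.inr ⟨q₁, q₂ ++ [i], x, by rw [hq]; simp, hx⟩

theorem matches_of_symbols (hll : LeftLinear S) {ρ : S.R} {t : Term F V ar} {p : Pos}
    (hsym : ∀ e f, (S.lhs ρ).val e = some (Sum.inl f) → t.val (p ++ e) = some (Sum.inl f)) :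
    ∃ σ, MatchesAt (S.lhs ρ) σ t p := by
  classical
  have key : ∀ q₁ x, (S.lhs ρ).val q₁ = some (Sum.inr x) → (t.val (p ++ q₁)).isSome := by
    intro q₁ x hq
    rcases List.eq_nil_or_concat q₁ with rfl | ⟨q', i, rfl⟩
    · obtain ⟨f, hf⟩ := lhs_root S ρ
      rw [hq] at hf; exact absurd hf (by simp)
    · simp only [List.concat_eq_append] at hq ⊢
      have hsome : ((S.lhs ρ).val (q' ++ [i])).isSome := by rw [hq]; rfl
      obtain ⟨f, hf, h1, h2⟩ := (FTerm.fval_node _ q' i).mp hsome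
      have h3 := hsym q' f hf
      have h4 : (t.val ((p ++ q') ++ [i])).isSome := (t.node (p ++ q') i).mpr ⟨f, h3, h1, h2⟩
      rw [← List.append_assoc]; exact h4
  refine ⟨fun x =>
    if h : ∃ q₁, (S.lhs ρ).val q₁ = some (Sum.inr x) then
      t.sub (p ++ h.choose) (key h.choose x h.choose_spec)
    else t, hsym, ?_⟩
  intro q x hq
  have hex : ∃ q₁, (S.lhs ρ).val q₁ = some (Sum.inr x) := ⟨q, hq⟩
  intro r
  simp only [dif_pos hex]
  have hcq : hex.choose = q := hll ρ hex.choose q x hex.choose_spec hq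
  show t.val ((p ++ q) ++ r) = t.val ((p ++ hex.choose) ++ r)
  rw [hcq]

theorem pattern_root (w : Redex S) : w.pos ∈ w.pattern := by
  obtain ⟨f, hf⟩ := lhs_root S w.rule
  exact ⟨[], f, by simp, hf⟩

theorem overlap_self (w : Redex S) : Overlap S w w := ⟨w.pos, pattern_root w, pattern_root w⟩

theorem overlap_symm {u v : Redex S} (h : Overlap S u v) : Overlap S v u := by
  obtain ⟨p, h1, h2⟩ := h; exact ⟨p, h2, h1⟩

theorem overlap_comparable {u v : Redex S} (h : Overlap S u v) :
    u.pos <+: v.pos ∨ v.pos <+: u.pos := by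
  obtain ⟨p, ⟨a, f, rfl, _⟩, ⟨b, g, hb, _⟩⟩ := h
  exact prefix_comparable ⟨a, rfl⟩ (⟨b, hb.symm⟩)

theorem overlap_of_inl {u v : Redex S} {e : Pos} {f : F}
    (hpos : v.pos = u.pos ++ e) (he : (S.lhs u.rule).val e = some (Sum.inl f)) :
    Overlap S u v :=
  ⟨v.pos, ⟨e, f, hpos, he⟩, pattern_root v⟩

end AuxD

section AuxE
variable {F V : Type} {ar : F → ℕ} {S : ITRS F V ar}

theorem prefix_antisymm {p q : Pos} (h1 : p <+: q) (h2 : q <+: p) : p = q :=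
  h1.eq_of_length (Nat.le_antisymm h1.length_le h2.length_le)

/-- The contraction of a single redex. -/
noncomputable def singleT (S : ITRS F V ar) (s : Term F V ar) (u : Redex S)
    (hm : ∃ σ, MatchesAt (S.lhs u.rule) σ s u.pos) : Term F V ar :=
  Dterm S s {u} (sigS S s)
    (goodW_of (Set.pairwise_singleton _ _)
      (by intro w hw; rw [Set.mem_singleton_iff] at hw; subst hw; exact hm))

theorem singleT_val_in {s : Term F V ar} {u : Redex S} {hm} (r : Pos) :
    (singleT S s u hm).val (u.pos ++ r) = go (sigS S s u) (S.rhs u.rule) [] r := by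
  unfold singleT
  exact Dterm_val_in (Set.mem_singleton u) r

theorem singleT_val_out {s : Term F V ar} {u : Redex S} {hm} {q : Pos}
    (hq : ¬ u.pos <+: q) : (singleT S s u hm).val q = s.val q :=
  Dterm_val_out (by intro w hw; rw [Set.mem_singleton_iff] at hw; subst hw; exact hq)

theorem singleT_step {s : Term F V ar} {u : Redex S} (hm) :
    StepRedex S u s (singleT S s u hm) := by
  refine ⟨sigS S s u, sigS_spec hm, ⟨?_, ?_⟩, ?_⟩
  · intro q f hq
    rw [singleT_val_in q]
    exact go_inl q [] hq
  · intro q x hq r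
    rw [List.append_assoc, singleT_val_in (q ++ r)]
    exact go_var q [] hq r
  · intro q hq
    exact singleT_val_out hq

/-- The replacement condition for orthogonalization: the outer redex `u` is
replaced by the inner redex `v` (with ties included iff `flag`). -/
def ocond (S : ITRS F V ar) (flag : Prop) (u v : Redex S) : Prop :=
  Overlap S u v ∧ u.pos <+: v.pos ∧ (flag ∨ u.pos ≠ v.pos)

/-- Orthogonalization of the step contracting `U` against the step
contracting `Vv`. -/
def orth (S : ITRS F V ar) (flag : Prop) (U Vv : Set (Redex S)) : Set (Redex S) :=
  {w | (w ∈ U ∧ ¬ ∃ v ∈ Vv, ocond S flag w v) ∨ (w ∈ Vv ∧ ∃ u ∈ U, ocond S flag u w)}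

theorem parallel_key {X : Set (Redex S)} (hX : ParallelSet S X) {w w' : Redex S}
    (hw : w ∈ X) (hw' : w' ∈ X) (hpre : w.pos <+: w'.pos) : w = w' := by
  by_contra hne
  exact (hX hw hw' hne).1 hpre

theorem orth_parallel {U Vv : Set (Redex S)} (flag : Prop)
    (hUp : ParallelSet S U) (hVp : ParallelSet S Vv) :
    ParallelSet S (orth S flag U Vv) := by
  have hpre : ∀ w ∈ orth S flag U Vv, ∀ w' ∈ orth S flag U Vv, w ≠ w' →
      ¬ w.pos <+: w'.pos := by
    rintro w hw w' hw' hne hp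
    rcases hw with ⟨hwU, hkept⟩ | ⟨hwV, u₀, hu₀, hoc⟩
    · rcases hw' with ⟨hw'U, _⟩ | ⟨hw'V, u₁, hu₁, hoc'⟩
      · exact hne (parallel_key hUp hwU hw'U hp)
      · -- w kept in U, w' = v added with witness u₁
        have hcmp : w.pos <+: u₁.pos ∨ u₁.pos <+: w.pos :=
          prefix_comparable hp hoc'.2.1
        have : w = u₁ := by
          rcases hcmp with h | h
          · exact parallel_key hUp hwU hu₁ h
          · exact (parallel_key hUp hu₁ hwU h).symm
        subst this
        exact hkept ⟨w', hw'V, hoc'⟩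
    · rcases hw' with ⟨hw'U, hkept'⟩ | ⟨hw'V, u₁, hu₁, hoc'⟩
      · -- w = v added (witness u₀), w' kept in U
        have h1 : u₀.pos <+: w'.pos := hoc.2.1.trans hp
        have : u₀ = w' := parallel_key hUp hu₀ hw'U h1
        subst this
        exact hkept' ⟨w, hwV, hoc⟩
      · exact hne (parallel_key hVp hwV hw'V hp)
  intro w hw w' hw' hne
  exact ⟨hpre w hw w' hw' hne, hpre w' hw' w hw hne.symm⟩

theorem orth_parstep {s t1 t2 : Term F V ar} {U Vv : Set (Redex S)} (flag : Prop)
    (hwo : WeaklyOrthogonal S) (hU : ParStep S U s t1) (hV : ParStep S Vv s t2) :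
    ParStep S (orth S flag U Vv) s t1 := by
  have hUp : ParallelSet S U := hU.1
  have hVp : ParallelSet S Vv := hV.1
  have hUm : ∀ u ∈ U, ∃ σ, MatchesAt (S.lhs u.rule) σ s u.pos := by
    intro u hu; obtain ⟨σ, hM, _⟩ := hU.2.1 u hu; exact ⟨σ, hM⟩
  have hVm : ∀ v ∈ Vv, ∃ σ, MatchesAt (S.lhs v.rule) σ s v.pos := by
    intro v hv; obtain ⟨σ, hM, _⟩ := hV.2.1 v hv; exact ⟨σ, hM⟩
  have hOm : ∀ w ∈ orth S flag U Vv, ∃ σ, MatchesAt (S.lhs w.rule) σ s w.pos := by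
    rintro w (⟨hwU, _⟩ | ⟨hwV, _⟩)
    · exact hUm w hwU
    · exact hVm w hwV
  have hOp : ParallelSet S (orth S flag U Vv) := orth_parallel flag hUp hVp
  have hg : goodW S s (orth S flag U Vv) := goodW_of hOp hOm
  have hstep : ParStep S (orth S flag U Vv) s (Dterm S s (orth S flag U Vv) (sigS S s) hg) :=
    parstep_Dterm hg hOp (fun w hw => sigS_spec (hOm w hw))
  have heq : t1 = Dterm S s (orth S flag U Vv) (sigS S s) hg := by
    apply Term.ext'
    intro q
    by_cases hqU : ∃ u, u ∈ U ∧ u.pos <+: q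
    · obtain ⟨u, hu, hupre⟩ := hqU
      obtain ⟨r, rfl⟩ := hupre
      by_cases hdrop : ∃ v ∈ Vv, ocond S flag u v
      · -- u was dropped; use weak orthogonality
        obtain ⟨v₀, hv₀, hoc₀⟩ := hdrop
        have hAB : ∀ v, ∀ hv : v ∈ Vv, ocond S flag u v →
            singleT S s u (hUm u hu) = singleT S s v (hVm v hv) := by
          intro v hv hoc
          exact hwo.2 s _ _ u v hoc.1 (singleT_step (hUm u hu)) (singleT_step (hVm v hv))
        have ht1 : t1.val (u.pos ++ r) = (singleT S s u (hUm u hu)).val (u.pos ++ r) := by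
          rw [parstep_val hU hu r, singleT_val_in r]
        by_cases hcov : ∃ v, v ∈ Vv ∧ ocond S flag u v ∧ v.pos <+: u.pos ++ r
        · obtain ⟨v, hv, hoc, hvpre⟩ := hcov
          have hvO : v ∈ orth S flag U Vv := Or.inr ⟨hv, u, hu, hoc⟩
          obtain ⟨rv, hrv⟩ := hvpre
          have hD : (Dterm S s (orth S flag U Vv) (sigS S s) hg).val (u.pos ++ r)
              = go (sigS S s v) (S.rhs v.rule) [] rv := by
            rw [← hrv] at *
            exact Dterm_val_in hvO rv
          have hB : (singleT S s v (hVm v hv)).val (u.pos ++ r)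
              = go (sigS S s v) (S.rhs v.rule) [] rv := by
            rw [← hrv]
            exact singleT_val_in rv
          rw [ht1, hAB v hv hoc, hB, hD]
        · have hD : (Dterm S s (orth S flag U Vv) (sigS S s) hg).val (u.pos ++ r)
              = s.val (u.pos ++ r) := by
            apply Dterm_val_out
            rintro w hw hwpre
            rcases hw with ⟨hwU, hkept⟩ | ⟨hwV, u₂, hu₂, hoc₂⟩
            · have : w = u := by
                rcases prefix_comparable hwpre ⟨r, rfl⟩ with h | h
                · exact parallel_key hUp hwU hu h
                · exact (parallel_key hUp hu hwU h).symm
              subst this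
              exact hkept ⟨v₀, hv₀, hoc₀⟩
            · have hu₂u : u₂ = u := by
                rcases prefix_comparable (hoc₂.2.1.trans hwpre) ⟨r, rfl⟩ with h | h
                · exact parallel_key hUp hu₂ hu h
                · exact (parallel_key hUp hu hu₂ h).symm
              subst hu₂u
              exact hcov ⟨w, hwV, hoc₂, hwpre⟩
          have hout : (singleT S s v₀ (hVm v₀ hv₀)).val (u.pos ++ r) = s.val (u.pos ++ r) := by
            apply singleT_val_out
            intro hpre
            exact hcov ⟨v₀, hv₀, hoc₀, hpre⟩
          rw [ht1, hAB v₀ hv₀ hoc₀, hout, hD]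
      · -- u kept
        have huO : u ∈ orth S flag U Vv := Or.inl ⟨hu, fun h => hdrop h⟩
        rw [parstep_val hU hu r, Dterm_val_in huO r]
    · push_neg at hqU
      have hDout : (Dterm S s (orth S flag U Vv) (sigS S s) hg).val q = s.val q := by
        apply Dterm_val_out
        rintro w hw hwpre
        rcases hw with ⟨hwU, _⟩ | ⟨hwV, u₀, hu₀, hoc₀⟩
        · exact hqU w hwU hwpre
        · exact hqU u₀ hu₀ (hoc₀.2.1.trans hwpre)
      rw [hDout, hU.2.2 q hqU]
  rw [heq]
  exact hstep

theorem orth_elem {U Vv : Set (Redex S)} {flag : Prop} {w : Redex S}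
    (hw : w ∈ orth S flag U Vv) :
    w ∈ U ∨ (w ∈ Vv ∧ ∃ u ∈ U, u.pos <+: w.pos ∧ (flag ∨ u.pos ≠ w.pos)) := by
  rcases hw with ⟨h, _⟩ | ⟨h, u, hu, hoc⟩
  · exact Or.inl h
  · exact Or.inr ⟨h, u, hu, hoc.2.1, hoc.2.2⟩

end AuxE

section AuxF
variable {F V : Type} {ar : F → ℕ} {S : ITRS F V ar}

theorem mut_orth {U Vv : Set (Redex S)} (hUp : ParallelSet S U) (hVp : ParallelSet S Vv)
    {w₁ w₂ : Redex S} (hw₁ : w₁ ∈ orth S True U Vv) (hw₂ : w₂ ∈ orth S False Vv U)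
    (hov : Overlap S w₁ w₂) : w₁ = w₂ := by
  rcases hw₁ with ⟨h1U, hkept₁⟩ | ⟨h1V, u₀, hu₀, hoc₀⟩
  · rcases hw₂ with ⟨h2V, hkept₂⟩ | ⟨h2U, v₀, hv₀, hoc₂⟩
    · -- kept in U vs kept in Vv
      exfalso
      rcases overlap_comparable hov with hpre | hpre
      · exact hkept₁ ⟨w₂, h2V, hov, hpre, Or.inl trivial⟩
      · by_cases heq : w₂.pos = w₁.pos
        · exact hkept₁ ⟨w₂, h2V, hov, heq ▸ List.prefix_refl _, Or.inl trivial⟩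
        · exact hkept₂ ⟨w₁, h1U, overlap_symm hov, hpre, Or.inr heq⟩
    · -- kept in U vs added from U
      rcases overlap_comparable hov with hpre | hpre
      · exact parallel_key hUp h1U h2U hpre
      · exact (parallel_key hUp h2U h1U hpre).symm
  · rcases hw₂ with ⟨h2V, hkept₂⟩ | ⟨h2U, v₀, hv₀, hoc₂⟩
    · -- added from Vv vs kept in Vv
      rcases overlap_comparable hov with hpre | hpre
      · exact parallel_key hVp h1V h2V hpre
      · exact (parallel_key hVp h2V h1V hpre).symm
    · -- added from Vv (witness u₀ ∈ U) vs added from U (witness v₀ ∈ Vv)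
      exfalso
      have hne₂ : v₀.pos ≠ w₂.pos := hoc₂.2.2.resolve_left (fun h => h.elim)
      rcases overlap_comparable hov with hpre | hpre
      · -- w₁.pos <+: w₂.pos
        have hvv : v₀ = w₁ := by
          rcases prefix_comparable hoc₂.2.1 hpre with h | h
          · exact parallel_key hVp hv₀ h1V h
          · exact (parallel_key hVp h1V hv₀ h).symm
        have huu : u₀ = w₂ := by
          rcases prefix_comparable (hoc₀.2.1.trans hpre) hoc₂.2.1 with h | h
          · rcases prefix_comparable (hoc₀.2.1.trans hpre) (List.prefix_refl w₂.pos) with h' | h'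
            · exact parallel_key hUp hu₀ h2U h'
            · exact (parallel_key hUp h2U hu₀ h').symm
          · rcases prefix_comparable (hoc₀.2.1.trans hpre) (List.prefix_refl w₂.pos) with h' | h'
            · exact parallel_key hUp hu₀ h2U h'
            · exact (parallel_key hUp h2U hu₀ h').symm
        rw [hvv] at hne₂
        have hba : w₂.pos <+: w₁.pos := by rw [← huu]; exact hoc₀.2.1
        exact hne₂ (prefix_antisymm hpre hba)
      · -- w₂.pos <+: w₁.pos
        have huu : u₀ = w₂ := by
          rcases prefix_comparable hoc₀.2.1 hpre with h | h
          · exact parallel_key hUp hu₀ h2U h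
          · exact (parallel_key hUp h2U hu₀ h).symm
        have hvv : v₀ = w₁ := by
          rcases prefix_comparable (hoc₂.2.1.trans hpre) (List.prefix_refl w₁.pos) with h | h
          · exact parallel_key hVp hv₀ h1V h
          · exact (parallel_key hVp h1V hv₀ h).symm
        rw [hvv] at hne₂
        have hab : w₁.pos <+: w₂.pos := by
          have := hoc₂.2.1; rw [hvv] at this; exact this
        exact hne₂ (prefix_antisymm hab hpre)

/-- The hypotheses for the join construction, symmetric in the union `W`. -/
def JHyp (S : ITRS F V ar) (s : Term F V ar) (W : Set (Redex S)) : Prop :=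
  (∀ w ∈ W, ∃ σ, MatchesAt (S.lhs w.rule) σ s w.pos) ∧
  (∀ w ∈ W, ∀ w' ∈ W, ∀ w'' ∈ W, w.pos <+: w'.pos → w'.pos <+: w''.pos →
      w ≠ w' → w' ≠ w'' → False) ∧
  (∀ w ∈ W, ∀ w' ∈ W, w.pos = w'.pos → w = w')

theorem var_pos_isSome {ℓ : FTerm F V ar} {σ} {t : Term F V ar} {p q₁ : Pos} {x : V}
    (hM : MatchesAt ℓ σ t p) (hroot : ∃ f, ℓ.val [] = some (Sum.inl f))
    (hq : ℓ.val q₁ = some (Sum.inr x)) : (t.val (p ++ q₁)).isSome := by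
  rcases List.eq_nil_or_concat q₁ with rfl | ⟨q', i, rfl⟩
  · obtain ⟨f, hf⟩ := hroot
    rw [hq] at hf; exact absurd hf (by simp)
  · simp only [List.concat_eq_append] at hq ⊢
    have hsome : (ℓ.val (q' ++ [i])).isSome := by rw [hq]; rfl
    obtain ⟨f, hf, h1, h2⟩ := (FTerm.fval_node _ q' i).mp hsome
    have h3 := hM.1 q' f hf
    have h4 : (t.val ((p ++ q') ++ [i])).isSome := (t.node (p ++ q') i).mpr ⟨f, h3, h1, h2⟩
    rw [← List.append_assoc]; exact h4

theorem redex_root_inl {ρ : S.R} {σ} {s : Term F V ar} {p : Pos}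
    (hM : MatchesAt (S.lhs ρ) σ s p) : ∃ f, s.val p = some (Sum.inl f) := by
  obtain ⟨f, hf⟩ := lhs_root S ρ
  have := hM.1 [] f hf
  rw [List.append_nil] at this
  exact ⟨f, this⟩

/-- The outermost elements of `W`. -/
def OuterSet (W : Set (Redex S)) : Set (Redex S) :=
  {w | w ∈ W ∧ ∀ w' ∈ W, w'.pos <+: w.pos → w' = w}

theorem outer_exists {s : Term F V ar} {W : Set (Redex S)} (hyp : JHyp S s W)
    {w : Redex S} (hw : w ∈ W) : ∃ o ∈ OuterSet W, o.pos <+: w.pos := by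
  by_cases h : w ∈ OuterSet W
  · exact ⟨w, h, List.prefix_refl _⟩
  · have : ∃ w' ∈ W, w'.pos <+: w.pos ∧ w' ≠ w := by
      by_contra hc
      push_neg at hc
      exact h ⟨hw, fun w' hw' hp => by
        by_contra hne
        exact hne (hc w' hw' hp)⟩
    obtain ⟨w', hw', hp, hne⟩ := this
    refine ⟨w', ⟨hw', fun w'' hw'' hp' => ?_⟩, hp⟩
    by_contra hne'
    exact hyp.2.1 w'' hw'' w' hw' w hw hp' hp hne' hne

theorem outer_unique {s : Term F V ar} {W : Set (Redex S)} (hyp : JHyp S s W)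
    {o o' : Redex S} (ho : o ∈ OuterSet W) (ho' : o' ∈ OuterSet W) {q : Pos}
    (h1 : o.pos <+: q) (h2 : o'.pos <+: q) : o = o' := by
  rcases prefix_comparable h1 h2 with h | h
  · exact ho'.2 o ho.1 h
  · exact (ho.2 o' ho'.1 h).symm

theorem goodW_outer {s : Term F V ar} {W : Set (Redex S)} (hyp : JHyp S s W) :
    goodW S s (OuterSet W) := by
  constructor
  · intro w hw w' hw' hp
    exact hw'.2 w hw.1 hp
  · intro w hw
    obtain ⟨σ, hM⟩ := hyp.1 w hw.1
    obtain ⟨f, hf⟩ := redex_root_inl hM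
    rw [hf]; rfl

/-- Relativization of redexes to the subterm at position `P`. -/
def relSet (W : Set (Redex S)) (P : Pos) : Set (Redex S) :=
  {w' | (⟨P ++ w'.pos, w'.rule⟩ : Redex S) ∈ W}

/-- Total subterm extraction. -/
noncomputable def subT (t : Term F V ar) (p : Pos) : Term F V ar :=
  if h : (t.val p).isSome then t.sub p h else t

theorem subT_val {t : Term F V ar} {p : Pos} (h : (t.val p).isSome) (q : Pos) :
    (subT t p).val q = t.val (p ++ q) := by
  rw [subT, dif_pos h]; rfl

theorem goodW_rel {s : Term F V ar} {W : Set (Redex S)} (hyp : JHyp S s W)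
    {o : Redex S} (ho : o ∈ W) {q₁ : Pos} (hq₁ : q₁ ≠ []) :
    goodW S (subT s (o.pos ++ q₁)) (relSet W (o.pos ++ q₁)) := by
  have hlen : ∀ rp : Pos, o.pos ≠ o.pos ++ q₁ ++ rp := by
    intro rp he
    have hl : (o.pos).length = ((o.pos ++ q₁) ++ rp).length := congrArg List.length he
    rw [List.length_append, List.length_append] at hl
    have hq : q₁.length ≠ 0 := fun h0 => hq₁ (List.eq_nil_of_length_eq_zero h0)
    omega
  constructor
  · intro w' hw' w'' hw'' hp
    have hW' : (⟨(o.pos ++ q₁) ++ w'.pos, w'.rule⟩ : Redex S) ∈ W := hw'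
    have hW'' : (⟨(o.pos ++ q₁) ++ w''.pos, w''.rule⟩ : Redex S) ∈ W := hw''
    by_cases heq : (⟨(o.pos ++ q₁) ++ w'.pos, w'.rule⟩ : Redex S)
        = (⟨(o.pos ++ q₁) ++ w''.pos, w''.rule⟩ : Redex S)
    · rw [Redex.mk.injEq] at heq
      obtain ⟨hpos, hrule⟩ := heq
      rw [List.append_assoc, List.append_assoc] at hpos
      have h1 : w'.pos = w''.pos :=
        List.append_cancel_left (List.append_cancel_left hpos)
      cases w'; cases w''
      simp only at h1 hrule
      rw [h1, hrule]
    · exfalso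
      have hone : o ≠ (⟨(o.pos ++ q₁) ++ w'.pos, w'.rule⟩ : Redex S) := by
        intro he
        exact hlen w'.pos (congrArg Redex.pos he)
      refine hyp.2.1 o ho _ hW' _ hW'' ?_ ?_ hone heq
      · exact ⟨q₁ ++ w'.pos, by simp⟩
      · show ((o.pos ++ q₁) ++ w'.pos) <+: ((o.pos ++ q₁) ++ w''.pos)
        exact prefix_append_cancel_iff.mpr hp
  · intro w' hw'
    have hW' : (⟨(o.pos ++ q₁) ++ w'.pos, w'.rule⟩ : Redex S) ∈ W := hw'
    obtain ⟨σ, hM⟩ := hyp.1 _ hW'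
    obtain ⟨f, hf⟩ := redex_root_inl hM
    have hsome : (s.val (o.pos ++ q₁)).isSome :=
      isSome_of_append (p := o.pos ++ q₁) (q := w'.pos) (by rw [hf]; rfl)
    rw [subT_val hsome w'.pos, hf]; rfl

open Classical in
/-- Contraction of all redexes of `W` lying strictly inside the subterm at `P`. -/
noncomputable def innerC (S : ITRS F V ar) (s : Term F V ar) (W : Set (Redex S))
    (P : Pos) : Term F V ar :=
  if h : goodW S (subT s P) (relSet W P) then
    Dterm S (subT s P) (relSet W P) (fun w' => sigS S s ⟨P ++ w'.pos, w'.rule⟩) h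
  else subT s P

open Classical in
/-- The substitution used for the outer redexes in the join term: each variable
is sent to the inner contraction of the corresponding subterm. -/
noncomputable def sigJ (S : ITRS F V ar) (s : Term F V ar) (W : Set (Redex S))
    (o : Redex S) (x : V) : Term F V ar :=
  if h : ∃ q₁, (S.lhs o.rule).val q₁ = some (Sum.inr x) then
    innerC S s W (o.pos ++ h.choose)
  else s

open Classical in
/-- The join term: the two-level simultaneous contraction of `W`. -/
noncomputable def joinT (S : ITRS F V ar) (s : Term F V ar) (W : Set (Redex S)) :
    Term F V ar :=
  if hg : goodW S s (OuterSet W) then Dterm S s (OuterSet W) (sigJ S s W) hg else s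

end AuxF

section AuxG
variable {F V : Type} {ar : F → ℕ} {S : ITRS F V ar}

theorem self_ne_append {p q : Pos} (hq : q ≠ []) : p ≠ p ++ q := by
  intro he
  have := congrArg List.length he
  rw [List.length_append] at this
  have : q.length = 0 := by omega
  exact hq (List.eq_nil_of_length_eq_zero this)

theorem prefix_append_incomp {a b c d : Pos} (h : ¬ a <+: b) (h' : ¬ b <+: a) :
    ¬ (a ++ c <+: b ++ d) := by
  intro hp
  rcases prefix_comparable ((List.prefix_append a c).trans hp) (List.prefix_append b d) with
    h1 | h1
  · exact h h1
  · exact h' h1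

theorem jval_in {s : Term F V ar} {W : Set (Redex S)} (hyp : JHyp S s W)
    {o : Redex S} (ho : o ∈ OuterSet W) (r : Pos) :
    (joinT S s W).val (o.pos ++ r) = go (sigJ S s W o) (S.rhs o.rule) [] r := by
  rw [joinT, dif_pos (goodW_outer hyp)]
  exact Dterm_val_in ho r

theorem jval_out {s : Term F V ar} {W : Set (Redex S)} (hyp : JHyp S s W)
    {q : Pos} (h : ∀ w ∈ W, ¬ w.pos <+: q) : (joinT S s W).val q = s.val q := by
  rw [joinT, dif_pos (goodW_outer hyp)]
  exact Dterm_val_out (fun w hw hp => h w hw.1 hp)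

theorem sigJ_val (hll : LeftLinear S) {s : Term F V ar} {W : Set (Redex S)}
    {o : Redex S} {q₁ : Pos} {x : V}
    (hq₁ : (S.lhs o.rule).val q₁ = some (Sum.inr x)) :
    sigJ S s W o x = innerC S s W (o.pos ++ q₁) := by
  have hex : ∃ q, (S.lhs o.rule).val q = some (Sum.inr x) := ⟨q₁, hq₁⟩
  rw [sigJ, dif_pos hex]
  have hcq : hex.choose = q₁ := hll o.rule _ q₁ x hex.choose_spec hq₁
  rw [hcq]

theorem innerC_val_in {s : Term F V ar} {W : Set (Redex S)} {P : Pos}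
    (hgr : goodW S (subT s P) (relSet W P)) {rp : Pos} {ρ : S.R}
    (hw : (⟨P ++ rp, ρ⟩ : Redex S) ∈ W) (r' : Pos) :
    (innerC S s W P).val (rp ++ r') = go (sigS S s ⟨P ++ rp, ρ⟩) (S.rhs ρ) [] r' := by
  rw [innerC, dif_pos hgr]
  exact Dterm_val_in (W := relSet W P) (w := ⟨rp, ρ⟩) hw r'

theorem innerC_val_out {s : Term F V ar} {W : Set (Redex S)} {P : Pos}
    (hgr : goodW S (subT s P) (relSet W P)) (hsome : (s.val P).isSome) {q' : Pos}
    (h : ∀ rp ρ, (⟨P ++ rp, ρ⟩ : Redex S) ∈ W → ¬ rp <+: q') :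
    (innerC S s W P).val q' = s.val (P ++ q') := by
  rw [innerC, dif_pos hgr]
  have hD := Dterm_val_out (S := S) (t := subT s P) (W := relSet W P)
    (σf := fun w' => sigS S s ⟨P ++ w'.pos, w'.rule⟩) (hg := hgr) (q := q')
    (fun w' hw' hp => h w'.pos w'.rule hw' hp)
  rw [hD]
  exact subT_val hsome q'

theorem fvar_no_inl_ext {ℓ : FTerm F V ar} {m e : Pos} {x : V} {f : F}
    (hm : ℓ.val m = some (Sum.inr x)) (he : ℓ.val e = some (Sum.inl f))
    (hpre : m <+: e) : False := by
  obtain ⟨d, rfl⟩ := hpre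
  rcases eq_or_ne d [] with rfl | hd
  · rw [List.append_nil] at he; rw [hm] at he; exact (by simp at he : False)
  · obtain ⟨g, hg⟩ := FTerm.fval_prefix_inl (by rw [he]; rfl) hd
    rw [hm] at hg; exact (by simp at hg : False)

end AuxG

section AuxH
variable {F V : Type} {ar : F → ℕ} {S : ITRS F V ar}

theorem var_pos_ne_nil {ρ : S.R} {q₁ : Pos} {x : V}
    (hq₁ : (S.lhs ρ).val q₁ = some (Sum.inr x)) : q₁ ≠ [] := by
  rintro rfl
  obtain ⟨f, hf⟩ := lhs_root S ρ
  rw [hq₁] at hf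
  exact (by simp at hf : False)

/-- The residual of the (orthogonalized) parallel step contracting `W₁`
over the (orthogonalized) parallel step contracting `W₂`. -/
def resid (S : ITRS F V ar) (W₁ W₂ : Set (Redex S)) : Set (Redex S) :=
  {e | (e ∈ W₁ ∧ e ∉ W₂ ∧ ∀ w ∈ W₂, ¬ w.pos <+: e.pos)
     ∨ ∃ a o q₁ q₂ x q₁', a ∈ W₁ ∧ a ∉ W₂ ∧ o ∈ W₂ ∧
         a.pos = o.pos ++ q₁ ++ q₂ ∧ (S.lhs o.rule).val q₁ = some (Sum.inr x) ∧
         (S.rhs o.rule).val q₁' = some (Sum.inr x) ∧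
         e = ⟨o.pos ++ q₁' ++ q₂, a.rule⟩}

theorem join_parstep {s t2 : Term F V ar} {W₁ W₂ : Set (Redex S)}
    (hll : LeftLinear S) (hP₁ : ParallelSet S W₁)
    (h₁m : ∀ w ∈ W₁, ∃ σ, MatchesAt (S.lhs w.rule) σ s w.pos)
    (h₂ : ParStep S W₂ s t2)
    (hmut : ∀ w₁ ∈ W₁, ∀ w₂ ∈ W₂, Overlap S w₁ w₂ → w₁ = w₂) :
    ParStep S (resid S W₁ W₂) t2 (joinT S s (W₁ ∪ W₂)) := by
  have hP₂ : ParallelSet S W₂ := h₂.1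
  have h₂m : ∀ w ∈ W₂, ∃ σ, MatchesAt (S.lhs w.rule) σ s w.pos := by
    intro w hw; obtain ⟨σ, hM, _⟩ := h₂.2.1 w hw; exact ⟨σ, hM⟩
  have hWm : ∀ w ∈ W₁ ∪ W₂, ∃ σ, MatchesAt (S.lhs w.rule) σ s w.pos := by
    rintro w (hw | hw)
    · exact h₁m w hw
    · exact h₂m w hw
  have posuniq : ∀ w ∈ W₁ ∪ W₂, ∀ w' ∈ W₁ ∪ W₂, w.pos = w'.pos → w = w' := by
    rintro w (h1 | h1) w' (h2 | h2) he
    · exact parallel_key hP₁ h1 h2 (he ▸ List.prefix_refl _)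
    · exact hmut w h1 w' h2 ⟨w.pos, pattern_root w, by rw [he]; exact pattern_root w'⟩
    · exact (hmut w' h2 w h1 ⟨w'.pos, pattern_root w', by rw [← he]; exact pattern_root w⟩).symm
    · exact parallel_key hP₂ h1 h2 (he ▸ List.prefix_refl _)
  have chain : ∀ w ∈ W₁ ∪ W₂, ∀ w' ∈ W₁ ∪ W₂, ∀ w'' ∈ W₁ ∪ W₂,
      w.pos <+: w'.pos → w'.pos <+: w''.pos → w ≠ w' → w' ≠ w'' → False := by
    intro w hw w' hw' w'' hw'' h1 h2 hne1 hne2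
    have hsame : ∀ {u u'}, u ∈ W₁ ∪ W₂ → u' ∈ W₁ ∪ W₂ → u.pos <+: u'.pos →
        u ≠ u' → (u ∈ W₁ → u' ∈ W₂) ∧ (u ∈ W₂ → u' ∈ W₁) := by
      rintro u u' (m | m) (m' | m') hp hne
      · exact absurd (parallel_key hP₁ m m' hp) hne
      · exact ⟨fun _ => m', fun hu2 => absurd (parallel_key hP₂ hu2 m' hp) hne⟩
      · exact ⟨fun hu1 => absurd (parallel_key hP₁ hu1 m' hp) hne, fun _ => m'⟩
      · exact absurd (parallel_key hP₂ m m' hp) hne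
    rcases hw with m1 | m1
    · have hw'2 : w' ∈ W₂ := (hsame (Or.inl m1) hw' h1 hne1).1 m1
      have hw''1 : w'' ∈ W₁ := (hsame (Or.inr hw'2) hw'' h2 hne2).2 hw'2
      have : w = w'' := parallel_key hP₁ m1 hw''1 (h1.trans h2)
      subst this
      have : w.pos = w'.pos := prefix_antisymm h1 h2
      exact hne1 (posuniq w (Or.inl m1) w' (Or.inr hw'2) this)
    · have hw'1 : w' ∈ W₁ := (hsame (Or.inr m1) hw' h1 hne1).2 m1
      have hw''2 : w'' ∈ W₂ := (hsame (Or.inl hw'1) hw'' h2 hne2).1 hw'1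
      have : w = w'' := parallel_key hP₂ m1 hw''2 (h1.trans h2)
      subst this
      have : w.pos = w'.pos := prefix_antisymm h1 h2
      exact hne1 (posuniq w (Or.inr m1) w' (Or.inl hw'1) this)
  have hyp : JHyp S s (W₁ ∪ W₂) := ⟨hWm, chain, posuniq⟩
  have hSigM : ∀ w ∈ W₁ ∪ W₂, MatchesAt (S.lhs w.rule) (sigS S s w) s w.pos :=
    fun w hw => sigS_spec (hWm w hw)
  have ht2in : ∀ w ∈ W₂, ∀ r, t2.val (w.pos ++ r) = go (sigS S s w) (S.rhs w.rule) [] r :=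
    fun w hw r => parstep_val h₂ hw r
  have ht2out : ∀ q, (∀ w ∈ W₂, ¬ w.pos <+: q) → t2.val q = s.val q := h₂.2.2
  -- outer facts
  have houter1 : ∀ {a : Redex S}, a ∈ W₁ → a ∉ W₂ → (∀ w ∈ W₂, ¬ w.pos <+: a.pos) →
      a ∈ OuterSet (W₁ ∪ W₂) := by
    intro a h1 h2 hno
    refine ⟨Or.inl h1, ?_⟩
    rintro w' (m | m) hp
    · exact parallel_key hP₁ m h1 hp
    · exact absurd hp (hno w' m)
  have houter2 : ∀ {o a : Redex S} {q₁ q₂ : Pos}, o ∈ W₂ → a ∈ W₁ → a ∉ W₂ →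
      a.pos = o.pos ++ q₁ ++ q₂ → q₁ ≠ [] → o ∈ OuterSet (W₁ ∪ W₂) := by
    intro o a q₁ q₂ ho2 ha1 han2 hapos hq₁ne
    refine ⟨Or.inr ho2, ?_⟩
    intro w' hw' hp
    by_contra hne
    have hoa : o ≠ a := fun he => han2 (he ▸ ho2)
    have hopre : o.pos <+: a.pos := ⟨q₁ ++ q₂, by rw [hapos, List.append_assoc]⟩
    exact chain w' hw' o (Or.inr ho2) a (Or.inl ha1) hp hopre hne hoa
  -- the key inner-contraction/target identification lemma (for kept redexes)
  have innert2 : ∀ {a : Redex S}, a ∈ W₁ → a ∉ W₂ → (∀ w ∈ W₂, ¬ w.pos <+: a.pos) →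
      ∀ {q₁ : Pos} {x : V}, (S.lhs a.rule).val q₁ = some (Sum.inr x) →
      ∀ r, (innerC S s (W₁ ∪ W₂) (a.pos ++ q₁)).val r = t2.val ((a.pos ++ q₁) ++ r) := by
    intro a ha1 han2 hno q₁ x hq₁ r
    have hq₁ne : q₁ ≠ [] := var_pos_ne_nil hq₁
    have hgr := goodW_rel hyp (Or.inl ha1 : a ∈ W₁ ∪ W₂) hq₁ne
    have hsomeP : (s.val (a.pos ++ q₁)).isSome :=
      var_pos_isSome (hSigM a (Or.inl ha1)) (lhs_root S a.rule) hq₁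
    by_cases hin : ∃ rp ρ, (⟨(a.pos ++ q₁) ++ rp, ρ⟩ : Redex S) ∈ W₁ ∪ W₂ ∧ rp <+: r
    · obtain ⟨rp, ρ, hmem, rp', rfl⟩ := hin
      have hw2 : (⟨(a.pos ++ q₁) ++ rp, ρ⟩ : Redex S) ∈ W₂ := by
        rcases hmem with m | m
        · exfalso
          have : a = ⟨(a.pos ++ q₁) ++ rp, ρ⟩ :=
            parallel_key hP₁ ha1 m ⟨q₁ ++ rp, by rw [List.append_assoc]⟩
          exact self_ne_append (p := a.pos) (q := q₁ ++ rp)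
            (fun h => hq₁ne (List.append_eq_nil_iff.mp h).1)
            (by rw [← List.append_assoc]; exact congrArg Redex.pos this)
        · exact m
      rw [innerC_val_in hgr hmem rp']
      have h := ht2in _ hw2 rp'
      rw [← List.append_assoc]
      exact h.symm
    · push_neg at hin
      rw [innerC_val_out hgr hsomeP (fun rp ρ hm hp => hin rp ρ hm hp)]
      have hno2 : ∀ w ∈ W₂, ¬ w.pos <+: (a.pos ++ q₁) ++ r := by
        intro w hw hp
        rcases prefix_comparable hp
            (⟨q₁ ++ r, by rw [List.append_assoc]⟩ : a.pos <+: (a.pos ++ q₁) ++ r) with h | h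
        · exact hno w hw h
        · obtain ⟨m, hm⟩ := h
          have hmpre : m <+: q₁ ++ r := by
            rw [← hm, List.append_assoc] at hp
            exact prefix_append_cancel_iff.mp hp
          rcases prefix_comparable hmpre (List.prefix_append q₁ r) with hmq | hqm
          · rcases eq_or_ne m q₁ with heq | hne
            · subst heq
              have hmem : (⟨(a.pos ++ m) ++ [], w.rule⟩ : Redex S) ∈ W₁ ∪ W₂ := by
                rw [List.append_nil, hm]
                exact Or.inr hw
              exact hin [] w.rule hmem List.nil_prefix
            · obtain ⟨d, hd⟩ := hmq
              have hdne : d ≠ [] := by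
                rintro rfl; rw [List.append_nil] at hd; exact hne hd
              obtain ⟨f, hf⟩ := FTerm.fval_prefix_inl (ℓ := S.lhs a.rule) (p := m) (q := d)
                (by rw [hd, hq₁]; rfl) hdne
              have hov : Overlap S a w := overlap_of_inl hm.symm hf
              have haw := hmut a ha1 w hw hov
              rw [haw] at han2
              exact han2 hw
          · obtain ⟨rp, rfl⟩ := hqm
            have hrp : rp <+: r := prefix_append_cancel_iff.mp hmpre
            have hmem : (⟨(a.pos ++ q₁) ++ rp, w.rule⟩ : Redex S) ∈ W₁ ∪ W₂ := by
              have hpos : (a.pos ++ q₁) ++ rp = w.pos := by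
                rw [← hm, List.append_assoc]
              rw [hpos]
              exact Or.inr hw
            exact hin rp w.rule hmem hrp
      rw [ht2out _ hno2]
  -- the residual set is parallel
  have hpar1 : ∀ e ∈ resid S W₁ W₂, ∀ e' ∈ resid S W₁ W₂, e ≠ e' →
      ¬ e.pos <+: e'.pos := by
    rintro e he e' he' hne hp
    rcases he with ⟨he1, hen2, hno⟩ | ⟨a, o, q₁, q₂, x, q₁', ha1, han2, ho2, hapos, hq₁, hq₁', rfl⟩
    · rcases he' with ⟨he'1, he'n2, hno'⟩ | ⟨a, o, q₁, q₂, x, q₁', ha1, han2, ho2, hapos, hq₁, hq₁', rfl⟩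
      · exact hne (parallel_key hP₁ he1 he'1 hp)
      · have hopre : o.pos <+: (⟨o.pos ++ q₁' ++ q₂, a.rule⟩ : Redex S).pos :=
          ⟨q₁' ++ q₂, by rw [List.append_assoc]⟩
        rcases prefix_comparable hp hopre with h | h
        · have hoa : o.pos <+: a.pos := ⟨q₁ ++ q₂, by rw [hapos, List.append_assoc]⟩
          have hea : e = a := parallel_key hP₁ he1 ha1 (h.trans hoa)
          subst hea
          have heq : e.pos = o.pos := prefix_antisymm h hoa
          have hq₁ne : q₁ ≠ [] := var_pos_ne_nil hq₁
          exact self_ne_append (p := o.pos) (q := q₁ ++ q₂)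
            (fun hnil => hq₁ne (List.append_eq_nil_iff.mp hnil).1)
            (by rw [← List.append_assoc, ← hapos]; exact heq.symm)
        · exact hno o ho2 h
    · rcases he' with ⟨he'1, he'n2, hno'⟩ | ⟨b, oB, pB1, pB2, xB, pB1', hb1, hbn2, hoB2, hbpos, hpB1, hpB1', rfl⟩
      · refine hno' o ho2 (List.IsPrefix.trans ?_ hp)
        exact ⟨q₁' ++ q₂, by rw [List.append_assoc]⟩
      · -- both residual copies
        have hooB : o = oB := by
          have h0 : o.pos <+: (⟨o.pos ++ q₁' ++ q₂, a.rule⟩ : Redex S).pos :=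
            ⟨q₁' ++ q₂, by rw [List.append_assoc]⟩
          have h1 : o.pos <+: (⟨oB.pos ++ pB1' ++ pB2, b.rule⟩ : Redex S).pos :=
            h0.trans hp
          have h2 : oB.pos <+: (⟨oB.pos ++ pB1' ++ pB2, b.rule⟩ : Redex S).pos :=
            ⟨pB1' ++ pB2, by rw [List.append_assoc]⟩
          rcases prefix_comparable h1 h2 with h | h
          · exact parallel_key hP₂ ho2 hoB2 h
          · exact (parallel_key hP₂ hoB2 ho2 h).symm
        subst hooB
        have hp' : q₁' ++ q₂ <+: pB1' ++ pB2 := by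
          have : o.pos ++ (q₁' ++ q₂) <+: o.pos ++ (pB1' ++ pB2) := by
            rw [← List.append_assoc, ← List.append_assoc]
            exact hp
          exact prefix_append_cancel_iff.mp this
        have hq₁'eq : q₁' = pB1' := by
          rcases prefix_comparable ((List.prefix_append q₁' q₂).trans hp')
            (List.prefix_append pB1' pB2) with h | h
          · exact tvar_prefix_eq hq₁' hpB1' h
          · exact (tvar_prefix_eq hpB1' hq₁' h).symm
        subst hq₁'eq
        have hxeq : x = xB := by
          rw [hq₁'] at hpB1'
          simpa using hpB1'
        subst hxeq
        have hq₁eq : q₁ = pB1 := hll o.rule q₁ pB1 x hq₁ hpB1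
        subst hq₁eq
        have hq₂pre : q₂ <+: pB2 := prefix_append_cancel_iff.mp hp'
        have hab : a = b := parallel_key hP₁ ha1 hb1 (by
          rw [hapos, hbpos, List.append_assoc, List.append_assoc]
          exact prefix_append_cancel_iff.mpr (prefix_append_cancel_iff.mpr hq₂pre))
        subst hab
        have hq₂eq : q₂ = pB2 := by
          have := hapos.symm.trans hbpos
          rw [List.append_assoc, List.append_assoc] at this
          exact List.append_cancel_left (List.append_cancel_left this)
        subst hq₂eq
        exact hne rfl
  -- main proof
  refine ⟨?_, ?_, ?_⟩
  · intro e he e' he' hne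
    exact ⟨hpar1 e he e' he' hne, hpar1 e' he' e he hne.symm⟩
  · -- each residual is a redex of t2 and an instance in the join term
    rintro e (⟨ha1, han2, hno⟩ | ⟨a, o, q₁, q₂, x, q₁', ha1, han2, ho2, hapos, hq₁, hq₁', rfl⟩)
    · -- kept redex
      have haout : e ∈ OuterSet (W₁ ∪ W₂) := houter1 ha1 han2 hno
      have hMs := hSigM e (Or.inl ha1)
      have hsymm : ∀ e' f, (S.lhs e.rule).val e' = some (Sum.inl f) →
          t2.val (e.pos ++ e') = some (Sum.inl f) := by
        intro e' f he'
        have hno2 : ∀ w ∈ W₂, ¬ w.pos <+: e.pos ++ e' := by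
          intro w hw hpw
          rcases prefix_comparable hpw (List.prefix_append e.pos e') with h | h
          · exact hno w hw h
          · obtain ⟨e'', he''⟩ := h
            have he''pre : e'' <+: e' := by
              rw [← he''] at hpw
              exact prefix_append_cancel_iff.mp hpw
            have hsome : ((S.lhs e.rule).val e'').isSome := by
              obtain ⟨d, rfl⟩ := he''pre
              exact FTerm.fval_isSome_of_append (by rw [he']; rfl)
            cases hv : (S.lhs e.rule).val e'' with
            | none => rw [hv] at hsome; exact (by simp at hsome : False)
            | some z =>
                cases z with
                | inl g =>
                    have hov : Overlap S e w := overlap_of_inl he''.symm hv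
                    have haw := hmut e ha1 w hw hov
                    rw [haw] at han2
                    exact han2 hw
                | inr y => exact fvar_no_inl_ext hv he' he''pre
        rw [ht2out _ hno2]
        exact (hSigM e (Or.inl ha1)).1 e' f he'
      obtain ⟨σ, hMσ⟩ := matches_of_symbols hll hsymm
      refine ⟨σ, hMσ, ?_, ?_⟩
      · intro d f hd
        rw [jval_in hyp haout d]
        exact go_inl d [] hd
      · intro d x hd r
        obtain ⟨q₁, hq₁⟩ := S.var_cond e.rule x d hd
        rw [List.append_assoc, jval_in hyp haout (d ++ r), go_var d [] hd r,
          sigJ_val hll hq₁]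
        exact (innert2 ha1 han2 hno hq₁ r).trans (hMσ.2 q₁ x hq₁ r)
    · -- residual copy inside the substitution of o
      have hq₁ne : q₁ ≠ [] := var_pos_ne_nil hq₁
      have hoout : o ∈ OuterSet (W₁ ∪ W₂) := houter2 ho2 ha1 han2 hapos hq₁ne
      have hgr := goodW_rel hyp (Or.inr ho2 : o ∈ W₁ ∪ W₂) hq₁ne
      have hamem : (⟨(o.pos ++ q₁) ++ q₂, a.rule⟩ : Redex S) ∈ W₁ ∪ W₂ := by
        have : (⟨(o.pos ++ q₁) ++ q₂, a.rule⟩ : Redex S) = a := by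
          rw [← hapos]
        rw [this]
        exact Or.inl ha1
      -- the join term below the residual position equals the a-contractum
      have hjoin : ∀ d, (joinT S s (W₁ ∪ W₂)).val ((⟨o.pos ++ q₁' ++ q₂, a.rule⟩ :
          Redex S).pos ++ d) = go (sigS S s a) (S.rhs a.rule) [] d := by
        intro d
        have h0 : (⟨o.pos ++ q₁' ++ q₂, a.rule⟩ : Redex S).pos ++ d
            = o.pos ++ (q₁' ++ (q₂ ++ d)) := by
          show (o.pos ++ q₁' ++ q₂) ++ d = _
          rw [List.append_assoc, List.append_assoc]
        rw [h0, jval_in hyp hoout, go_var q₁' [] hq₁' (q₂ ++ d), sigJ_val hll hq₁]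
        have h1 := innerC_val_in hgr hamem d
        have h2 : sigS S s ⟨(o.pos ++ q₁) ++ q₂, a.rule⟩ = sigS S s a := by
          congr 1
          rw [← hapos]
        rw [h2] at h1
        exact h1
      -- values of t2 in the copied region
      have ht2e : ∀ d, t2.val ((⟨o.pos ++ q₁' ++ q₂, a.rule⟩ : Redex S).pos ++ d)
          = s.val (a.pos ++ d) := by
        intro d
        have h0 : (⟨o.pos ++ q₁' ++ q₂, a.rule⟩ : Redex S).pos ++ d
            = o.pos ++ (q₁' ++ (q₂ ++ d)) := by
          show (o.pos ++ q₁' ++ q₂) ++ d = _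
          rw [List.append_assoc, List.append_assoc]
        rw [h0, ht2in o ho2, go_var q₁' [] hq₁' (q₂ ++ d)]
        have h1 := (hSigM o (Or.inr ho2)).2 q₁ x hq₁ (q₂ ++ d)
        rw [← h1]
        congr 1
        rw [hapos]
        simp [List.append_assoc]
      have hsymm : ∀ d f, (S.lhs a.rule).val d = some (Sum.inl f) →
          t2.val ((⟨o.pos ++ q₁' ++ q₂, a.rule⟩ : Redex S).pos ++ d)
            = some (Sum.inl f) := by
        intro d f hd
        rw [ht2e d]
        exact (hSigM a (Or.inl ha1)).1 d f hd
      obtain ⟨σ, hMσ⟩ := matches_of_symbols hll hsymm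
      refine ⟨σ, hMσ, ?_, ?_⟩
      · intro d f hd
        rw [hjoin d]
        exact go_inl d [] hd
      · intro d y hd r
        obtain ⟨p₁, hp₁⟩ := S.var_cond a.rule y d hd
        have hL : (joinT S s (W₁ ∪ W₂)).val ((⟨o.pos ++ q₁' ++ q₂, a.rule⟩ :
            Redex S).pos ++ d ++ r) = (sigS S s a y).val r := by
          rw [List.append_assoc, hjoin (d ++ r)]
          exact go_var d [] hd r
        rw [hL]
        have hR := hMσ.2 p₁ y hp₁ r
        have hR' : (σ y).val r = s.val ((a.pos ++ p₁) ++ r) := by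
          rw [← hR]
          rw [List.append_assoc]
          rw [ht2e (p₁ ++ r)]
          rw [List.append_assoc]
        have hS := (hSigM a (Or.inl ha1)).2 p₁ y hp₁ r
        rw [hR', ← hS]
  · -- positions outside the residuals are untouched
    intro q hq
    by_cases hcw : ∃ w ∈ W₁ ∪ W₂, w.pos <+: q
    · obtain ⟨w, hw, hwpre⟩ := hcw
      obtain ⟨o, hoout, hopre⟩ := outer_exists hyp hw
      have hoq : o.pos <+: q := hopre.trans hwpre
      by_cases hoW2 : o ∈ W₂
      · obtain ⟨r, rfl⟩ := hoq
        rw [jval_in hyp hoout r, ht2in o hoW2 r]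
        by_cases hinl : ∃ f, (S.rhs o.rule).val r = some (Sum.inl f)
        · obtain ⟨f, hf⟩ := hinl
          rw [go_inl r [] hf, go_inl r [] hf]
        · by_cases hvar : ∃ q₁' q₂ x, r = q₁' ++ q₂ ∧
              (S.rhs o.rule).val q₁' = some (Sum.inr x)
          · obtain ⟨q₁', q₂, x, rfl, hx⟩ := hvar
            rw [go_var q₁' [] hx q₂, go_var q₁' [] hx q₂, sigJ_val hll
              (S.var_cond o.rule x q₁' hx).choose_spec]
            set q₁ := (S.var_cond o.rule x q₁' hx).choose with hq₁def
            have hq₁ : (S.lhs o.rule).val q₁ = some (Sum.inr x) :=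
              (S.var_cond o.rule x q₁' hx).choose_spec
            have hq₁ne : q₁ ≠ [] := var_pos_ne_nil hq₁
            have hgr := goodW_rel hyp (Or.inr hoW2 : o ∈ W₁ ∪ W₂) hq₁ne
            have hsomeP : (s.val (o.pos ++ q₁)).isSome :=
              var_pos_isSome (hSigM o (Or.inr hoW2)) (lhs_root S o.rule) hq₁
            have hnoin : ∀ rp ρ, (⟨(o.pos ++ q₁) ++ rp, ρ⟩ : Redex S) ∈ W₁ ∪ W₂ →
                ¬ rp <+: q₂ := by
              intro rp ρ hmem hrp
              have hmem1 : (⟨(o.pos ++ q₁) ++ rp, ρ⟩ : Redex S) ∈ W₁ := by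
                rcases hmem with m | m
                · exact m
                · exfalso
                  have : o = ⟨(o.pos ++ q₁) ++ rp, ρ⟩ :=
                    parallel_key hP₂ hoW2 m ⟨q₁ ++ rp, by rw [List.append_assoc]⟩
                  exact self_ne_append (p := o.pos) (q := q₁ ++ rp)
                    (fun h => hq₁ne (List.append_eq_nil_iff.mp h).1)
                    (by rw [← List.append_assoc]; exact congrArg Redex.pos this)
              have hmemn2 : (⟨(o.pos ++ q₁) ++ rp, ρ⟩ : Redex S) ∉ W₂ := by
                intro m
                have : o = ⟨(o.pos ++ q₁) ++ rp, ρ⟩ :=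
                  parallel_key hP₂ hoW2 m ⟨q₁ ++ rp, by rw [List.append_assoc]⟩
                exact self_ne_append (p := o.pos) (q := q₁ ++ rp)
                  (fun h => hq₁ne (List.append_eq_nil_iff.mp h).1)
                  (by rw [← List.append_assoc]; exact congrArg Redex.pos this)
              have hres : (⟨o.pos ++ q₁' ++ rp, ρ⟩ : Redex S) ∈ resid S W₁ W₂ :=
                Or.inr ⟨⟨(o.pos ++ q₁) ++ rp, ρ⟩, o, q₁, rp, x, q₁', hmem1, hmemn2,
                  hoW2, rfl, hq₁, hx, rfl⟩
              refine hq _ hres ?_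
              show o.pos ++ q₁' ++ rp <+: o.pos ++ (q₁' ++ q₂)
              rw [List.append_assoc]
              exact prefix_append_cancel_iff.mpr (prefix_append_cancel_iff.mpr hrp)
            rw [innerC_val_out hgr hsomeP hnoin]
            have h1 := (hSigM o (Or.inr hoW2)).2 q₁ x hq₁ q₂
            rw [← h1]
          · push_neg at hinl hvar
            rw [go_none (a := []) hinl (fun q₁ q₂ x hq => hvar q₁ q₂ x hq),
              go_none (a := []) hinl (fun q₁ q₂ x hq => hvar q₁ q₂ x hq)]
      · -- o ∈ W₁ \ W₂ outermost: then o is itself a kept residual, contradiction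
        exfalso
        have ho1 : o ∈ W₁ := by
          rcases hoout.1 with m | m
          · exact m
          · exact absurd m hoW2
        have hno : ∀ w' ∈ W₂, ¬ w'.pos <+: o.pos := by
          intro w' hw' hp
          exact hoW2 ((hoout.2 w' (Or.inr hw') hp) ▸ hw')
        exact hq o (Or.inl ⟨ho1, hoW2, hno⟩) hoq
    · push_neg at hcw
      rw [jval_out hyp hcw, ht2out q (fun w hw => hcw w (Or.inr hw))]
end AuxH

section AuxI
variable {F V : Type} {ar : F → ℕ} {S : ITRS F V ar}

theorem resid_elem {W₁ W₂ : Set (Redex S)} {e : Redex S} (he : e ∈ resid S W₁ W₂) :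
    e ∈ W₁ ∨ ∃ o ∈ W₂, ∃ q₁' q₂ : Pos, e.pos = o.pos ++ q₁' ++ q₂ ∧
      ∃ x, (S.rhs o.rule).val q₁' = some (Sum.inr x) := by
  rcases he with ⟨h1, _, _⟩ | ⟨a, o, q₁, q₂, x, q₁', _, _, ho2, _, _, hq₁', rfl⟩
  · exact Or.inl h1
  · exact Or.inr ⟨o, ho2, q₁', q₂, rfl, x, hq₁'⟩

end AuxI


/-- Let `φ : s ⊸ t₁` and `ψ : s ⊸ t₂` be parallel steps in a
weakly orthogonal iTRS `R`, with `d_φ` and `d_ψ` (lower bounds on) the minimal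
depths of redexes contracted in `φ` and `ψ`.  Then the weakly orthogonal
projections `φ/ψ : t₂ ⊸ u` and `ψ/φ : t₁ ⊸ u` contract redexes only at depth
`≥ min(d_φ, d_ψ)`; if moreover `R` has no collapsing rules, then `φ/ψ`
contracts redexes only at depth `≥ min(d_φ, d_ψ + 1)` and `ψ/φ` only at depth
`≥ min(d_ψ, d_φ + 1)`. -/
theorem parallel_projection_depth {F V : Type} {ar : F → ℕ} (S : ITRS F V ar)
    (hwo : WeaklyOrthogonal S) (s t₁ t₂ : Term F V ar)
    (Uφ Vψ : Set (Redex S)) (dφ dψ : ℕ)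
    (hφ : ParStep S Uφ s t₁) (hψ : ParStep S Vψ s t₂)
    (hdφ : ∀ u ∈ Uφ, dφ ≤ u.pos.length) (hdψ : ∀ v ∈ Vψ, dψ ≤ v.pos.length) :
    (∃ (u : Term F V ar) (U' V' : Set (Redex S)),
      ParStep S U' t₂ u ∧ ParStep S V' t₁ u ∧
      (∀ w ∈ U', min dφ dψ ≤ w.pos.length) ∧
      (∀ w ∈ V', min dφ dψ ≤ w.pos.length)) ∧
    (NonCollapsing S →
      ∃ (u : Term F V ar) (U' V' : Set (Redex S)),
        ParStep S U' t₂ u ∧ ParStep S V' t₁ u ∧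
        (∀ w ∈ U', min dφ (dψ + 1) ≤ w.pos.length) ∧
        (∀ w ∈ V', min dψ (dφ + 1) ≤ w.pos.length)) := by
  classical
  -- orthogonalize the two parallel steps
  set P1 : Set (Redex S) := orth S True Uφ Vψ with hP1def
  set P2 : Set (Redex S) := orth S False Vψ Uφ with hP2def
  have hΦ : ParStep S P1 s t₁ := orth_parstep True hwo hφ hψ
  have hΨ : ParStep S P2 s t₂ := orth_parstep False hwo hψ hφ
  have hmutP : ∀ w₁ ∈ P1, ∀ w₂ ∈ P2, Overlap S w₁ w₂ → w₁ = w₂ :=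
    fun w₁ h1 w₂ h2 hov => mut_orth hφ.1 hψ.1 h1 h2 hov
  have hΦm : ∀ w ∈ P1, ∃ σ, MatchesAt (S.lhs w.rule) σ s w.pos := by
    intro w hw; obtain ⟨σ, hM, _⟩ := hΦ.2.1 w hw; exact ⟨σ, hM⟩
  have hΨm : ∀ w ∈ P2, ∃ σ, MatchesAt (S.lhs w.rule) σ s w.pos := by
    intro w hw; obtain ⟨σ, hM, _⟩ := hΨ.2.1 w hw; exact ⟨σ, hM⟩
  -- the common reduct and the two projections
  have hU' : ParStep S (resid S P1 P2) t₂ (joinT S s (P1 ∪ P2)) :=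
    join_parstep hwo.1 hΦ.1 hΦm hΨ hmutP
  have hV' : ParStep S (resid S P2 P1) t₁ (joinT S s (P1 ∪ P2)) := by
    have h := join_parstep hwo.1 hΨ.1 hΨm hΦ
      (fun w₂ h2 w₁ h1 hov => (hmutP w₁ h1 w₂ h2 (overlap_symm hov)).symm)
    rwa [Set.union_comm] at h
  -- depth bounds for the orthogonalized steps
  have bΦ : ∀ w ∈ P1, dφ ≤ w.pos.length := by
    intro w hw
    rcases orth_elem hw with h | ⟨_, u, hu, hpre, _⟩
    · exact hdφ w h
    · exact le_trans (hdφ u hu) hpre.length_le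
  have bΨ : ∀ w ∈ P2, dψ ≤ w.pos.length := by
    intro w hw
    rcases orth_elem hw with h | ⟨_, v, hv, hpre, _⟩
    · exact hdψ w h
    · exact le_trans (hdψ v hv) hpre.length_le
  have bU1 : ∀ e ∈ resid S P1 P2, min dφ dψ ≤ e.pos.length := by
    intro e he
    rcases resid_elem he with h | ⟨o, ho, q₁', q₂, hpos, x, _⟩
    · exact le_trans (min_le_left _ _) (bΦ e h)
    · refine le_trans (min_le_right _ _) ?_
      rw [hpos, List.length_append, List.length_append]
      have := bΨ o ho
      omega
  have bV1 : ∀ e ∈ resid S P2 P1, min dφ dψ ≤ e.pos.length := by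
    intro e he
    rcases resid_elem he with h | ⟨o, ho, q₁', q₂, hpos, x, _⟩
    · exact le_trans (min_le_right _ _) (bΨ e h)
    · refine le_trans (min_le_left _ _) ?_
      rw [hpos, List.length_append, List.length_append]
      have := bΦ o ho
      omega
  refine ⟨⟨joinT S s (P1 ∪ P2), resid S P1 P2, resid S P2 P1, hU', hV', bU1, bV1⟩, ?_⟩
  intro hnc
  have hq₁'ne : ∀ (ρ : S.R) (q₁' : Pos) (x : V),
      (S.rhs ρ).val q₁' = some (Sum.inr x) → 1 ≤ q₁'.length := by
    intro ρ q₁' x h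
    rcases List.eq_nil_or_concat q₁' with rfl | ⟨l, i, rfl⟩
    · exact absurd ⟨x, h⟩ (hnc ρ)
    · simp [List.concat_eq_append]
  refine ⟨joinT S s (P1 ∪ P2), resid S P1 P2, resid S P2 P1, hU', hV', ?_, ?_⟩
  · intro e he
    rcases resid_elem he with h | ⟨o, ho, q₁', q₂, hpos, x, hx⟩
    · exact le_trans (min_le_left _ _) (bΦ e h)
    · refine le_trans (min_le_right _ _) ?_
      rw [hpos, List.length_append, List.length_append]
      have h1 := bΨ o ho
      have h2 := hq₁'ne o.rule q₁' x hx
      omega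
  · intro e he
    rcases resid_elem he with h | ⟨o, ho, q₁', q₂, hpos, x, hx⟩
    · exact le_trans (min_le_left _ _) (bΨ e h)
    · refine le_trans (min_le_right _ _) ?_
      rw [hpos, List.length_append, List.length_append]
      have h1 := bΦ o ho
      have h2 := hq₁'ne o.rule q₁' x hx
      omega


end WOInf
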